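/- arXiv:hep-th/9611160 — 5 statements merged into one kernel-verified Lean document; each statement's English description precedes it below -/
import Mathlib

section
/- Let M be a module of the Virasoro algebra, h ∈ ℂ, and v ∈ M a vector such that L_0·(L_{−1}·v) = (h − 1)·(L_{−1}·v) and L_0·(L_{−2}·v) = (h − 2)·(L_{−2}·v). Then the vector v₀ := (L_0 − h)·v satisfies L_{−n}·v₀ = 0 for all n ≥ 1 (i.e. v₀ is annihilated by all lowering operators). -/
/-!
The annihilator of a vector is a Lie subalgebra, and `L₋₁`, `L₋₂` generate all lowering
operators, since `[L₋₁, L₋ₙ] = (1 - n) L₋ₙ₋₁` with `1 - n ≠ 0` for `n ≥ 2`. So it suffices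
that `L₋₁` and `L₋₂` kill `v₀ = (L₀ - h)·v`; and `L₋ₖ·v₀ = (L₀ - (h - k))·(L₋ₖ·v)` is exactly
the eigenvector hypothesis for `k = 1, 2`.
-/

/-- A representation of the Virasoro algebra on a complex vector space `V`:
a family of operators `L n` (`n : ℤ`) and an operator `C` satisfying the Virasoro
commutation relations
`[L m, L n] = (n - m) L (m+n) + (C/12)(n³ - n) δ_{m+n,0}` and `[C, L n] = 0`. -/
structure VirasoroRep (V : Type) [AddCommGroup V] [Module ℂ V] where
  L : ℤ → Module.End ℂ V
  C : Module.End ℂ V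
  comm_LL : ∀ m n : ℤ, L m * L n - L n * L m =
      ((n : ℂ) - (m : ℂ)) • L (m + n) +
        (if m + n = 0 then (((n : ℂ) ^ 3 - (n : ℂ)) / 12) else 0) • C
  comm_CL : ∀ n : ℤ, C * L n - L n * C = 0

namespace VirasoroRep

variable {V : Type} [AddCommGroup V] [Module ℂ V] (ρ : VirasoroRep V)

theorem L_comm_apply {m n : ℤ} (hmn : m + n ≠ 0) (x : V) :
    ρ.L m (ρ.L n x) - ρ.L n (ρ.L m x) = ((n : ℂ) - m) • ρ.L (m + n) x := by
  simpa [hmn] using congrArg (fun f : Module.End ℂ V => f x) (ρ.comm_LL m n)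

theorem L_apply_L_zero_sub_smul {k : ℤ} (hk : k ≠ 0) (h : ℂ) (x : V) :
    ρ.L k (ρ.L 0 x - h • x) = ρ.L 0 (ρ.L k x) - (h + k) • ρ.L k x := by
  have hcomm := ρ.L_comm_apply (m := k) (n := 0) (by simpa using hk) x
  rw [add_zero] at hcomm
  rw [map_sub, map_smul, sub_eq_iff_eq_add'.mp hcomm]
  module

theorem L_add_apply_eq_zero {m n : ℤ} (hmn : m + n ≠ 0) (hne : m ≠ n) {u : V}
    (hm : ρ.L m u = 0) (hn : ρ.L n u = 0) : ρ.L (m + n) u = 0 := by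
  have hcoeff : (n : ℂ) - m ≠ 0 := sub_ne_zero.mpr (by exact_mod_cast hne.symm)
  have hcomm := ρ.L_comm_apply hmn u
  rw [hm, hn, map_zero, map_zero, sub_zero, eq_comm] at hcomm
  exact (smul_eq_zero.mp hcomm).resolve_left hcoeff

theorem L_neg_apply_eq_zero_of_L_neg_one_of_L_neg_two {u : V}
    (h1 : ρ.L (-1) u = 0) (h2 : ρ.L (-2) u = 0) : ∀ n : ℤ, 1 ≤ n → ρ.L (-n) u = 0 := by
  intro n hn
  induction n, hn using Int.leInduction with
  | base => exact h1
  | succ n hn ih =>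
    rcases hn.eq_or_lt with rfl | hn
    · exact h2
    · have hstep := ρ.L_add_apply_eq_zero (m := -1) (n := -n) (by omega) (by omega) h1 ih
      rwa [show -1 + -n = -(n + 1) by ring] at hstep

end VirasoroRep

/-- If `v` is a vector of a Virasoro module such that `L₋₁·v` is an `L₀`-eigenvector of
eigenvalue `h - 1` and `L₋₂·v` is an `L₀`-eigenvector of eigenvalue `h - 2`, then the vector
`v₀ := (L₀ - h)·v` is annihilated by all lowering operators `L₋ₙ`, `n ≥ 1` (it is singular). -/
theorem virasoro_staggered_nilpotent_part_singular
    (V : Type) [AddCommGroup V] [Module ℂ V] (ρ : VirasoroRep V) (h : ℂ) (v : V)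
    (h1 : ρ.L 0 (ρ.L (-1) v) = (h - 1) • ρ.L (-1) v)
    (h2 : ρ.L 0 (ρ.L (-2) v) = (h - 2) • ρ.L (-2) v) :
    ∀ n : ℤ, 1 ≤ n → ρ.L (-n) (ρ.L 0 v - h • v) = 0 := by
  apply ρ.L_neg_apply_eq_zero_of_L_neg_one_of_L_neg_two
  · rw [ρ.L_apply_L_zero_sub_smul (by norm_num), h1]
    push_cast
    module
  · rw [ρ.L_apply_L_zero_sub_smul (by norm_num), h2]
    push_cast
    module
end

section
/- In the Verma module V(h,c) with distinguished singular vector v, the vectors L_{i_1}·L_{i_2}·…·L_{i_k}·v with k ∈ ℕ and i_1 ≥ i_2 ≥ … ≥ i_k ≥ 1 form a basis of V(h,c) as a complex vector space. Consequently, for every n ∈ ℕ the eigenspace of L_0 in V(h,c) with eigenvalue h + n has dimension p(n), the number of partitions of n. -/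
namespace VirasoroRep

variable {V W : Type} [AddCommGroup V] [Module ℂ V] [AddCommGroup W] [Module ℂ W]

/-- `v` is a singular vector of weight `(h, c)`: it is annihilated by all `L (-n)`, `n ≥ 1`,
and is an eigenvector of `L 0` and `C` with eigenvalues `h` resp. `c`. -/
def IsSingular (ρ : VirasoroRep V) (h c : ℂ) (v : V) : Prop :=
  (∀ n : ℤ, 1 ≤ n → ρ.L (-n) v = 0) ∧ ρ.L 0 v = h • v ∧ ρ.C v = c • v

/-- A linear subspace invariant under the Virasoro action, i.e. an `𝔏`-submodule. -/
def Invariant (ρ : VirasoroRep V) (p : Submodule ℂ V) : Prop :=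
  (∀ n : ℤ, ∀ x ∈ p, ρ.L n x ∈ p) ∧ ∀ x ∈ p, ρ.C x ∈ p

/-- The `𝔏`-submodule `U(𝔏)·v` generated by a vector `v`: the smallest invariant subspace
containing `v`. -/
def gen (ρ : VirasoroRep V) (v : V) : Submodule ℂ V :=
  sInf {p : Submodule ℂ V | ρ.Invariant p ∧ v ∈ p}

/-- The vector `v` generates the module: `U(𝔏)·v` is everything. -/
def Generates (ρ : VirasoroRep V) (v : V) : Prop :=
  ∀ p : Submodule ℂ V, ρ.Invariant p → v ∈ p → p = ⊤

/-- A homomorphism of Virasoro modules: a linear map intertwining the actions. -/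
def IsHom (ρ : VirasoroRep V) (σ : VirasoroRep W) (f : V →ₗ[ℂ] W) : Prop :=
  (∀ (n : ℤ) (x : V), f (ρ.L n x) = σ.L n (f x)) ∧ ∀ x : V, f (ρ.C x) = σ.C (f x)

end VirasoroRep

/-- A bundled module of the Virasoro algebra (a complex vector space together with a
Virasoro representation on it). -/
structure VirasoroModule where
  carrier : Type
  [isAddCommGroup : AddCommGroup carrier]
  [isModule : Module ℂ carrier]
  rep : VirasoroRep carrier

attribute [instance] VirasoroModule.isAddCommGroup VirasoroModule.isModule

/-- `M` together with the singular vector `v` is a Verma module of weight `(h, c)`: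
`v` is singular of weight `(h, c)`, generates `M`, and the pair has the universal property
that any singular vector of weight `(h, c)` in any Virasoro module receives a unique
homomorphism from `M` sending `v` to it. -/
def IsVermaModule (h c : ℂ) (M : VirasoroModule) (v : M.carrier) : Prop :=
  M.rep.IsSingular h c v ∧ M.rep.Generates v ∧
    ∀ (W : VirasoroModule) (w : W.carrier), W.rep.IsSingular h c w →
      ∃! f : M.carrier →ₗ[ℂ] W.carrier, M.rep.IsHom W.rep f ∧ f v = w

/-!
PBW monomials span a Verma module: straightening with the Virasoro relations rewrites `L n`
applied to a PBW monomial as a combination of PBW monomials that are shorter, or of the same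
length with leading index at most `max n i₁`. They are linearly independent because the universal
property maps them to the basis of a model: the free vector space on PBW words, on which `L n`
acts by the same straightening rule. The Virasoro relations in the model follow by induction on
the word, the inductive step being the Jacobi identity. Finally `L 0` acts on the monomial of `l`
by `h + l.sum`, so the eigenspace for `h + n` has a basis indexed by the partitions of `n`.
-/

lemma Module.Basis.eigenspace_eq_span {ι K V : Type*} [CommRing K] [NoZeroDivisors K]
    [AddCommGroup V] [Module K V] (b : Module.Basis ι K V) {f : Module.End K V} {μ : ι → K}
    (hf : ∀ i, f (b i) = μ i • b i) (a : K) :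
    f.eigenspace a = Submodule.span K (b '' {i | μ i = a}) := by
  have hrepr (x : V) (i : ι) : b.repr (f x) i = μ i * b.repr x i := by
    have : Finsupp.lapply i ∘ₗ b.repr.toLinearMap ∘ₗ f =
        μ i • (Finsupp.lapply i ∘ₗ b.repr.toLinearMap) := b.ext fun j => by
      rcases eq_or_ne j i with rfl | hji <;> simp [*]
    exact congr($this x)
  ext x
  rw [Module.End.mem_eigenspace_iff, b.mem_span_image, ← b.repr.injective.eq_iff,
    Finsupp.ext_iff]
  simp only [hrepr, map_smul, Finsupp.smul_apply, smul_eq_mul, ← sub_eq_zero (b := a * _),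
    ← sub_mul, mul_eq_zero, sub_eq_zero]
  simp only [Set.subset_def, Finset.mem_coe, Finsupp.mem_support_iff, Set.mem_ofPred_eq,
    or_iff_not_imp_right]

lemma Module.Basis.finrank_eigenspace {ι K V : Type*} [CommRing K] [IsDomain K] [AddCommGroup V]
    [Module K V] (b : Module.Basis ι K V) {f : Module.End K V} {μ : ι → K}
    (hf : ∀ i, f (b i) = μ i • b i) (a : K) [Fintype {i // μ i = a}] :
    Module.finrank K (f.eigenspace a) = Fintype.card {i // μ i = a} := by
  rw [b.eigenspace_eq_span hf, Set.image_eq_range]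
  exact finrank_span_eq_card (ι := {i // μ i = a})
    (b.linearIndependent.comp _ Subtype.val_injective)

noncomputable def virasoroCocycle (m n : ℤ) : ℂ := if m + n = 0 then ((n : ℂ) ^ 3 - n) / 12 else 0

lemma virasoroCocycle_self (n : ℤ) : virasoroCocycle n n = 0 := by
  unfold virasoroCocycle
  split_ifs with hn
  · obtain rfl : n = 0 := by omega
    simp
  · rfl

lemma virasoroCocycle_swap (m n : ℤ) : virasoroCocycle n m = -virasoroCocycle m n := by
  unfold virasoroCocycle
  rw [add_comm n m]
  split_ifs with hmn
  · obtain rfl : m = -n := by omega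
    push_cast
    ring
  · simp

lemma virasoroCocycle_of_ne {m n : ℤ} (h : m + n ≠ 0) : virasoroCocycle m n = 0 := if_neg h

section Jacobi

variable {M : Type} [AddCommGroup M] [Module ℂ M] (ℓ : ℤ → Module.End ℂ M) (c : ℂ)

noncomputable def virasoroDefect (m n : ℤ) : Module.End ℂ M :=
  ℓ m * ℓ n - ℓ n * ℓ m - ((n : ℂ) - m) • ℓ (m + n) - (virasoroCocycle m n * c) • 1

variable {ℓ c}

lemma virasoroDefect_apply_eq_zero_iff {m n : ℤ} {x : M} :
    virasoroDefect ℓ c m n x = 0 ↔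
      ℓ m (ℓ n x) = ℓ n (ℓ m x) + ((n : ℂ) - m) • ℓ (m + n) x + virasoroCocycle m n • c • x := by
  simp only [virasoroDefect, LinearMap.sub_apply, LinearMap.smul_apply, Module.End.mul_apply,
    Module.End.one_apply]
  rw [sub_sub, sub_sub, sub_eq_zero, ← add_assoc, mul_smul]

variable (ℓ c)

lemma virasoroDefect_swap (m n : ℤ) : virasoroDefect ℓ c n m = -virasoroDefect ℓ c m n := by
  rw [virasoroDefect, virasoroDefect, virasoroCocycle_swap, add_comm n m]
  module

lemma virasoroDefect_self (n : ℤ) : virasoroDefect ℓ c n n = 0 := by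
  rw [virasoroDefect, virasoroCocycle_self]
  module

variable {ℓ c}

lemma virasoroDefect_apply_eq_zero_of_lt {x : M}
    (H : ∀ m n, m < n → virasoroDefect ℓ c m n x = 0) (m n : ℤ) :
    virasoroDefect ℓ c m n x = 0 := by
  rcases lt_trichotomy m n with hmn | rfl | hmn
  · exact H m n hmn
  · rw [virasoroDefect_self, LinearMap.zero_apply]
  · rw [virasoroDefect_swap, LinearMap.neg_apply, H n m hmn, neg_zero]

/-- The Jacobi identity carries the relation for `(m, n)` from `x` to `ℓ i x`; the central terms
match because `virasoroCocycle` is a 2-cocycle. -/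
lemma virasoroDefect_apply_eq_zero_of_jacobi {m n i : ℤ} {x : M}
    (hmn : virasoroDefect ℓ c m n x = 0) (hmin : virasoroDefect ℓ c (m + i) n x = 0)
    (hmni : virasoroDefect ℓ c m (n + i) x = 0) (hmi : virasoroDefect ℓ c m i x = 0)
    (hni : virasoroDefect ℓ c n i x = 0) (hmni' : virasoroDefect ℓ c (m + n) i x = 0)
    (hmi_n : virasoroDefect ℓ c m i (ℓ n x) = 0) (hni_m : virasoroDefect ℓ c n i (ℓ m x) = 0) :
    virasoroDefect ℓ c m n (ℓ i x) = 0 := by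
  rw [virasoroDefect_apply_eq_zero_iff] at *
  rw [← sub_eq_zero, hni, hmi, hmni']
  simp only [map_add, map_smul]
  rw [hmi_n, hni_m, hmn]
  simp only [map_add, map_smul]
  rw [hmin, hmni, show m + i + n = m + n + i by ring, show m + (n + i) = m + n + i by ring]
  by_cases hcase : m + n + i = 0
  · obtain rfl : m = -n - i := by omega
    simp only [virasoroCocycle, if_pos (show -n - i + n + i = 0 by ring),
      if_pos (show -n - i + i + n = 0 by ring), if_pos (show -n - i + (n + i) = 0 by ring)]
    push_cast
    match_scalars <;> ring
  · simp only [virasoroCocycle_of_ne hcase, virasoroCocycle_of_ne (show m + i + n ≠ 0 by omega),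
      virasoroCocycle_of_ne (show m + (n + i) ≠ 0 by omega)]
    match_scalars <;> ring

end Jacobi

def IsPBW (l : List ℤ) : Prop := l.Pairwise (· ≥ ·) ∧ ∀ i ∈ l, 1 ≤ i

instance : DecidablePred IsPBW := fun _ => inferInstanceAs (Decidable (_ ∧ _))

lemma isPBW_nil : IsPBW [] := ⟨List.Pairwise.nil, by simp⟩

lemma isPBW_cons {i : ℤ} {l : List ℤ} : IsPBW (i :: l) ↔ IsPBW l ∧ 1 ≤ i ∧ l.headI ≤ i := by
  unfold IsPBW
  constructor
  · rintro ⟨hp, hpos⟩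
    refine ⟨⟨hp.of_cons, fun j hj => hpos j (.tail _ hj)⟩, hpos i (.head _), ?_⟩
    cases l with
    | nil => simpa using (hpos i (.head _)).trans' zero_le_one
    | cons j l => exact List.rel_of_pairwise_cons hp (.head _)
  · rintro ⟨⟨hp, hpos⟩, hi, hhead⟩
    refine ⟨List.pairwise_cons.mpr ⟨fun j hj => ?_, hp⟩, List.forall_mem_cons.mpr ⟨hi, hpos⟩⟩
    cases l with
    | nil => simp at hj
    | cons k l =>
      rcases List.mem_cons.mp hj with rfl | hj
      · exact hhead
      · exact (List.rel_of_pairwise_cons hp hj).trans hhead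

def pbwBelow (k : ℕ) (b : ℤ) : Set (List ℤ) :=
  {s | IsPBW s ∧ (s.length < k ∨ s.length = k ∧ s.headI ≤ b)}

lemma pbwBelow_mono {k k' : ℕ} {b b' : ℤ} (h : k < k' ∨ k = k' ∧ b ≤ b') :
    pbwBelow k b ⊆ pbwBelow k' b' :=
  fun _ ⟨hs, hb⟩ => ⟨hs, by omega⟩

namespace VirasoroRep

variable {V W : Type} [AddCommGroup V] [Module ℂ V] [AddCommGroup W] [Module ℂ W]
  (ρ : VirasoroRep V)

lemma L_L_apply (m n : ℤ) (x : V) :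
    ρ.L m (ρ.L n x) =
      ρ.L n (ρ.L m x) + ((n : ℂ) - m) • ρ.L (m + n) x + virasoroCocycle m n • ρ.C x := by
  have := congrArg (· x) (ρ.comm_LL m n)
  simp only [LinearMap.sub_apply, LinearMap.add_apply, LinearMap.smul_apply,
    Module.End.mul_apply] at this
  rw [sub_eq_iff_eq_add'] at this
  rw [this, add_assoc]
  rfl

lemma C_L_apply (n : ℤ) (x : V) : ρ.C (ρ.L n x) = ρ.L n (ρ.C x) :=
  sub_eq_zero.mp (congrArg (· x) (ρ.comm_CL n))

def monomial (v : V) (l : List ℤ) : V := l.foldr (fun i x => ρ.L i x) v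

lemma monomial_cons (v : V) (i : ℤ) (l : List ℤ) :
    ρ.monomial v (i :: l) = ρ.L i (ρ.monomial v l) := rfl

lemma IsHom.map_monomial {σ : VirasoroRep W} {f : V →ₗ[ℂ] W} (hf : ρ.IsHom σ f) (v : V)
    (l : List ℤ) : f (ρ.monomial v l) = σ.monomial (f v) l := by
  induction l with
  | nil => rfl
  | cons i l ih => rw [monomial_cons, monomial_cons, hf.1, ih]

def pbwSpan (v : V) (k : ℕ) (b : ℤ) : Submodule ℂ V :=
  Submodule.span ℂ (ρ.monomial v '' pbwBelow k b)

lemma pbwSpan_mono (v : V) {k k' : ℕ} {b b' : ℤ} (h : k < k' ∨ k = k' ∧ b ≤ b') :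
    ρ.pbwSpan v k b ≤ ρ.pbwSpan v k' b' :=
  Submodule.span_mono <| Set.image_mono (pbwBelow_mono h)

lemma monomial_mem_pbwSpan (v : V) {k : ℕ} {b : ℤ} {s : List ℤ} (hs : s ∈ pbwBelow k b) :
    ρ.monomial v s ∈ ρ.pbwSpan v k b :=
  Submodule.subset_span ⟨s, hs, rfl⟩

variable {ρ} {h c : ℂ} {v : V}

lemma IsSingular.C_monomial (hv : ρ.IsSingular h c v) (l : List ℤ) :
    ρ.C (ρ.monomial v l) = c • ρ.monomial v l := by
  induction l with
  | nil => exact hv.2.2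
  | cons i l ih => rw [monomial_cons, C_L_apply, ih, map_smul]

lemma IsSingular.L_zero_monomial (hv : ρ.IsSingular h c v) (l : List ℤ) :
    ρ.L 0 (ρ.monomial v l) = (h + l.sum) • ρ.monomial v l := by
  induction l with
  | nil => rw [List.sum_nil, Int.cast_zero, add_zero]; exact hv.2.1
  | cons i l ih =>
    have h0 : virasoroCocycle 0 i = 0 := by unfold virasoroCocycle; split_ifs <;> simp_all
    rw [monomial_cons, L_L_apply, ih, h0, zero_smul, add_zero, zero_add, map_smul,
      List.sum_cons, Int.cast_add]
    module

lemma IsSingular.L_mem_pbwSpan_one (hv : ρ.IsSingular h c v) (n : ℤ) :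
    ρ.L n v ∈ ρ.pbwSpan v 1 n := by
  rcases lt_trichotomy n 0 with hn | rfl | hn
  · rw [← neg_neg n, hv.1 (-n) (by omega)]
    exact zero_mem _
  · rw [hv.2.1]
    exact Submodule.smul_mem _ _ (ρ.monomial_mem_pbwSpan v ⟨isPBW_nil, Or.inl zero_lt_one⟩)
  · exact ρ.monomial_mem_pbwSpan v (s := [n]) ⟨isPBW_cons.mpr ⟨isPBW_nil, hn, hn.le⟩,
      Or.inr ⟨rfl, le_rfl⟩⟩

lemma IsSingular.L_monomial_mem_pbwSpan (hv : ρ.IsSingular h c v) {l : List ℤ} (hl : IsPBW l)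
    (n : ℤ) : ρ.L n (ρ.monomial v l) ∈ ρ.pbwSpan v (l.length + 1) (max n l.headI) := by
  induction hk : l.length using Nat.strong_induction_on generalizing l n with
  | _ k ih =>
  subst hk
  cases l with
  | nil => exact ρ.pbwSpan_mono v (Or.inr ⟨rfl, le_max_left _ _⟩) (hv.L_mem_pbwSpan_one n)
  | cons i t =>
    obtain ⟨ht, hi, hti⟩ := isPBW_cons.mp hl
    by_cases hin : i ≤ n
    · exact ρ.monomial_mem_pbwSpan v (s := n :: i :: t)
        ⟨isPBW_cons.mpr ⟨hl, hi.trans hin, hin⟩, Or.inr ⟨rfl, le_max_left _ _⟩⟩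
    push Not at hin
    have iht := fun m => ih t.length (by simp) ht m rfl
    have hmax : max n (i :: t).headI = i := max_eq_right hin.le
    rw [hmax, monomial_cons, L_L_apply]
    refine add_mem (add_mem ?_ ?_) ?_
    · suffices (ρ.pbwSpan v (t.length + 1) (max n t.headI)).map (ρ.L i) ≤
          ρ.pbwSpan v (t.length + 2) i from this (Submodule.mem_map_of_mem (iht n))
      rw [pbwSpan, Submodule.map_span_le]
      rintro _ ⟨s, ⟨hs, hsb⟩, rfl⟩
      rcases hsb with hlt | ⟨hlen, hhead⟩
      · exact ρ.pbwSpan_mono v (Or.inl (by omega)) (ih s.length (by simp; omega) hs i rfl)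
      · exact ρ.monomial_mem_pbwSpan v (s := i :: s)
          ⟨isPBW_cons.mpr ⟨hs, hi, hhead.trans (max_le hin.le hti)⟩,
            Or.inr ⟨by simp [hlen], le_rfl⟩⟩
    · exact Submodule.smul_mem _ _ (ρ.pbwSpan_mono v (Or.inl (by simp)) (iht (n + i)))
    · rw [hv.C_monomial]
      exact Submodule.smul_mem _ _ <| Submodule.smul_mem _ _ <|
        ρ.monomial_mem_pbwSpan v ⟨ht, Or.inl (by simp)⟩

lemma IsSingular.span_monomial_eq_top (hv : ρ.IsSingular h c v) (hgen : ρ.Generates v) :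
    Submodule.span ℂ (ρ.monomial v '' {l | IsPBW l}) = ⊤ := by
  have hle (k : ℕ) (b : ℤ) : ρ.pbwSpan v k b ≤ Submodule.span ℂ (ρ.monomial v '' {l | IsPBW l}) :=
    Submodule.span_mono (Set.image_mono fun _ hs => hs.1)
  refine hgen _ ⟨fun n x hx => ?_, fun x hx => ?_⟩ (Submodule.subset_span ⟨[], isPBW_nil, rfl⟩)
  · refine (Submodule.map_span_le (ρ.L n) _ _).mpr ?_ (Submodule.mem_map_of_mem hx)
    rintro _ ⟨l, hl, rfl⟩
    exact hle _ _ (hv.L_monomial_mem_pbwSpan hl n)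
  · refine (Submodule.map_span_le ρ.C _ _).mpr ?_ (Submodule.mem_map_of_mem hx)
    rintro _ ⟨l, hl, rfl⟩
    rw [hv.C_monomial]
    exact Submodule.smul_mem _ _ (Submodule.subset_span ⟨l, hl, rfl⟩)

end VirasoroRep

namespace VermaModel

open Finsupp

variable (h c : ℂ)

/-- `single l 1` models the monomial `L i₁ ⋯ L iₖ · v` for `l = [i₁, …, iₖ]`. `L n` prepends `n`
when the result is again a PBW word; otherwise it acts on `[]` as on a singular vector of weight
`(h, c)`, and on `i :: t` (where `n < i`) through `L n L i = L i L n + (i - n) L (n + i) + ⋯`.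
The budget `k` makes the recursion structural; it stops mattering once `l.length < k`
(`actFuel_eq_act`). -/
noncomputable def actFuel : ℕ → ℤ → List ℤ → (List ℤ →₀ ℂ)
  | 0, _, _ => 0
  | _ + 1, n, [] => if 1 ≤ n then single [n] 1 else if n = 0 then h • single [] 1 else 0
  | k + 1, n, i :: t =>
      if i ≤ n then single (n :: i :: t) 1
      else (actFuel k n t).sum (fun s a => a • actFuel k i s)
        + ((i : ℂ) - n) • actFuel k (n + i) t + virasoroCocycle n i • c • single t 1

lemma actFuel_of_headI_le {n : ℤ} {s : List ℤ} (hn : 1 ≤ n) (hs : s.headI ≤ n) (k : ℕ) :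
    actFuel h c (k + 1) n s = single (n :: s) 1 := by
  cases s with
  | nil => simp [actFuel, hn]
  | cons j s => simp [actFuel, show j ≤ n from hs]

lemma actFuel_mem_supported (k : ℕ) :
    ∀ (n : ℤ) {l : List ℤ}, IsPBW l →
      actFuel h c k n l ∈ supported ℂ ℂ (pbwBelow (l.length + 1) (max n l.headI)) := by
  induction k with
  | zero => intro n l _; exact zero_mem _
  | succ k ih =>
  intro n l hl
  cases l with
  | nil =>
    simp only [actFuel]
    split_ifs with hn
    · exact single_mem_supported ℂ _
        ⟨isPBW_cons.mpr ⟨isPBW_nil, hn, by change (0 : ℤ) ≤ n; omega⟩,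
          Or.inr ⟨rfl, le_max_left _ _⟩⟩
    · exact Submodule.smul_mem _ _ (single_mem_supported ℂ _ ⟨isPBW_nil, Or.inl zero_lt_one⟩)
    · exact zero_mem _
  | cons i t =>
  obtain ⟨ht, hi, hti⟩ := isPBW_cons.mp hl
  simp only [actFuel]
  split_ifs with hin
  · exact single_mem_supported ℂ _
      ⟨isPBW_cons.mpr ⟨hl, hi.trans hin, hin⟩, Or.inr ⟨rfl, le_max_left _ _⟩⟩
  push Not at hin
  refine add_mem (add_mem (Submodule.finsuppSum_mem _ _ _ _ fun s hs => ?_) ?_) ?_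
  · obtain ⟨hs, hsb⟩ := (mem_supported ℂ _).mp (ih n ht) (mem_support_iff.mpr hs)
    refine Submodule.smul_mem _ _ (supported_mono (pbwBelow_mono ?_) (ih i hs))
    simp only [List.length_cons, List.headI_cons]
    omega
  · exact Submodule.smul_mem _ _ <|
      supported_mono (pbwBelow_mono (Or.inl (by simp))) (ih (n + i) ht)
  · exact Submodule.smul_mem _ _ <| Submodule.smul_mem _ _ <|
      single_mem_supported ℂ _ ⟨ht, Or.inl (by simp)⟩

lemma actFuel_succ {k : ℕ} : ∀ (n : ℤ) {l : List ℤ}, IsPBW l → l.length + 1 ≤ k →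
    actFuel h c (k + 1) n l = actFuel h c k n l := by
  induction k with
  | zero => intro n l _ hk; omega
  | succ k ih =>
  intro n l hl hk
  cases l with
  | nil => rfl
  | cons i t =>
  obtain ⟨ht, hi, hti⟩ := isPBW_cons.mp hl
  have hkt : t.length + 1 ≤ k := by simp only [List.length_cons] at hk; omega
  simp only [actFuel]
  split_ifs with hin
  · rfl
  push Not at hin
  rw [ih n ht hkt, ih (n + i) ht hkt]
  congr 2
  refine Finsupp.sum_congr fun s hs => ?_
  obtain ⟨hs, hsb⟩ := (mem_supported ℂ _).mp (actFuel_mem_supported h c k n ht) hs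
  rcases hsb with hlt | ⟨-, hhead⟩
  · rw [ih i hs (by omega)]
  · obtain ⟨k, rfl⟩ : ∃ k', k = k' + 1 := ⟨k - 1, by omega⟩
    rw [actFuel_of_headI_le h c hi (hhead.trans (max_le hin.le hti)),
      actFuel_of_headI_le h c hi (hhead.trans (max_le hin.le hti))]

noncomputable def act (n : ℤ) (l : List ℤ) : List ℤ →₀ ℂ := actFuel h c (l.length + 1) n l

lemma actFuel_eq_act {k : ℕ} (n : ℤ) {l : List ℤ} (hl : IsPBW l) (hk : l.length + 1 ≤ k) :
    actFuel h c k n l = act h c n l := by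
  induction k, hk using Nat.le_induction with
  | base => rfl
  | succ k hk ih => rw [actFuel_succ h c n hl hk, ih]

lemma actFuel_eq_act_of_mem_pbwBelow {k : ℕ} {i : ℤ} {s : List ℤ} (hi : 1 ≤ i)
    (hs : s ∈ pbwBelow (k + 1) i) : actFuel h c (k + 1) i s = act h c i s := by
  obtain ⟨hs, hlt | ⟨hlen, hhead⟩⟩ := hs
  · exact actFuel_eq_act h c i hs hlt
  · rw [act, actFuel_of_headI_le h c hi hhead, actFuel_of_headI_le h c hi hhead]

/-- `opL` and `opC` kill the basis vectors of non-PBW words, so that the Virasoro relations hold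
there trivially. -/
noncomputable def opL (n : ℤ) : (List ℤ →₀ ℂ) →ₗ[ℂ] List ℤ →₀ ℂ :=
  linearCombination ℂ fun w => if IsPBW w then act h c n w else 0

noncomputable def opC : (List ℤ →₀ ℂ) →ₗ[ℂ] List ℤ →₀ ℂ :=
  linearCombination ℂ fun w => if IsPBW w then c • single w 1 else 0

variable {h c}

lemma opL_single {w : List ℤ} (hw : IsPBW w) (n : ℤ) : opL h c n (single w 1) = act h c n w := by
  simp [opL, hw]

lemma opL_single_of_not_isPBW {w : List ℤ} (hw : ¬IsPBW w) (n : ℤ) :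
    opL h c n (single w 1) = 0 := by
  simp [opL, hw]

lemma opC_single {w : List ℤ} (hw : IsPBW w) : opC c (single w 1) = c • single w 1 := by
  simp [opC, hw]

lemma opC_single_of_not_isPBW {w : List ℤ} (hw : ¬IsPBW w) : opC c (single w 1) = 0 := by
  simp [opC, hw]

lemma opL_mem_supported (n : ℤ) (x : List ℤ →₀ ℂ) :
    opL h c n x ∈ supported ℂ ℂ {w | IsPBW w} := by
  refine Submodule.finsuppSum_mem _ _ _ _ fun w _ => Submodule.smul_mem _ _ ?_
  dsimp only
  split_ifs with hw
  · exact supported_mono (fun _ hs => hs.1) (actFuel_mem_supported h c _ n hw)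
  · exact zero_mem _

lemma opC_of_mem_supported {x : List ℤ →₀ ℂ} (hx : x ∈ supported ℂ ℂ {w | IsPBW w}) :
    opC c x = c • x := by
  rw [supported_eq_span_single] at hx
  induction hx using Submodule.span_induction with
  | mem _ hy =>
    obtain ⟨w, hw, rfl⟩ := hy
    exact opC_single hw
  | zero => simp
  | add x y _ _ hx hy => rw [map_add, hx, hy, smul_add]
  | smul a x _ hx => rw [map_smul, hx, smul_comm]

lemma opL_single_of_headI_le {n : ℤ} {l : List ℤ} (hl : IsPBW l) (hn : 1 ≤ n)
    (hln : l.headI ≤ n) : opL h c n (single l 1) = single (n :: l) 1 := by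
  rw [opL_single hl, act, actFuel_of_headI_le h c hn hln]

lemma opL_single_nil_of_neg {n : ℤ} (hn : n < 0) : opL h c n (single [] 1) = 0 := by
  rw [opL_single isPBW_nil, act, List.length_nil, actFuel, if_neg (by omega), if_neg (by omega)]

lemma opL_zero_single_nil : opL h c 0 (single [] 1) = h • single [] 1 := by
  rw [opL_single isPBW_nil, act, List.length_nil, actFuel, if_neg (by omega), if_pos rfl]

lemma opL_single_cons_of_lt {n i : ℤ} {t : List ℤ} (hl : IsPBW (i :: t)) (hni : n < i) :
    opL h c n (single (i :: t) 1) = opL h c i (opL h c n (single t 1))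
      + ((i : ℂ) - n) • opL h c (n + i) (single t 1) + virasoroCocycle n i • c • single t 1 := by
  obtain ⟨ht, hi, hti⟩ := isPBW_cons.mp hl
  rw [opL_single hl, act, List.length_cons, actFuel, if_neg (not_le.mpr hni), opL_single ht,
    opL_single ht]
  congr 2
  refine Finsupp.sum_congr fun s hs => ?_
  obtain ⟨hs, hsb⟩ := (mem_supported ℂ _).mp (actFuel_mem_supported h c _ n ht) hs
  simp only [LinearMap.smulRight_apply, LinearMap.id_apply, if_pos hs]
  rw [actFuel_eq_act_of_mem_pbwBelow h c hi ⟨hs, by omega⟩]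

lemma virasoroDefect_opL_eq_zero_of_mem_supported {m n : ℤ} {S : Set (List ℤ)}
    (H : ∀ w ∈ S, virasoroDefect (opL h c) c m n (single w 1) = 0) {x : List ℤ →₀ ℂ}
    (hx : x ∈ supported ℂ ℂ S) : virasoroDefect (opL h c) c m n x = 0 := by
  rw [supported_eq_span_single] at hx
  have : Submodule.span ℂ ((fun w => single w 1) '' S) ≤
      LinearMap.ker (virasoroDefect (opL h c) c m n) :=
    Submodule.span_le.mpr fun _ ⟨w, hw, hx⟩ => hx ▸ H w hw
  exact this hx

lemma virasoroDefect_opL_single_of_headI_le {m n : ℤ} {l : List ℤ} (hl : IsPBW l) (hmn : m < n)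
    (hn : 1 ≤ n) (hln : l.headI ≤ n) : virasoroDefect (opL h c) c m n (single l 1) = 0 := by
  rw [virasoroDefect_apply_eq_zero_iff, opL_single_of_headI_le hl hn hln,
    opL_single_cons_of_lt (isPBW_cons.mpr ⟨hl, hn, hln⟩) hmn]

lemma virasoroDefect_opL_single_nil (m n : ℤ) :
    virasoroDefect (opL h c) c m n (single [] 1) = 0 := by
  refine virasoroDefect_apply_eq_zero_of_lt (fun m n hmn => ?_) m n
  by_cases hn : 1 ≤ n
  · exact virasoroDefect_opL_single_of_headI_le isPBW_nil hmn hn (by simp; omega)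
  obtain ⟨a, ha⟩ : ∃ a : ℂ, opL h c n (single [] 1) = a • single [] 1 := by
    rcases (by omega : n < 0 ∨ n = 0) with hn | rfl
    · exact ⟨0, by rw [opL_single_nil_of_neg hn, zero_smul]⟩
    · exact ⟨h, opL_zero_single_nil⟩
  rw [virasoroDefect_apply_eq_zero_iff, ha, map_smul, opL_single_nil_of_neg (show m < 0 by omega),
    opL_single_nil_of_neg (show m + n < 0 by omega), virasoroCocycle_of_ne (by omega)]
  simp

lemma virasoroDefect_opL_single_of_cons {i : ℤ} {t : List ℤ} (hl : IsPBW (i :: t)) (a : ℤ) :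
    virasoroDefect (opL h c) c a i (single t 1) = 0 := by
  obtain ⟨ht, hi, hti⟩ := isPBW_cons.mp hl
  rcases lt_trichotomy a i with hai | rfl | hai
  · rw [virasoroDefect_apply_eq_zero_iff, opL_single_of_headI_le ht hi hti,
      opL_single_cons_of_lt hl hai]
  · rw [virasoroDefect_self, LinearMap.zero_apply]
  · rw [virasoroDefect_swap, LinearMap.neg_apply,
      virasoroDefect_opL_single_of_headI_le ht hai (hi.trans hai.le) (hti.trans hai.le), neg_zero]

lemma virasoroDefect_opL_single {l : List ℤ} (hl : IsPBW l) (m n : ℤ) :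
    virasoroDefect (opL h c) c m n (single l 1) = 0 := by
  induction hk : l.length using Nat.strong_induction_on generalizing l m n with
  | _ k ih =>
  subst hk
  cases l with
  | nil => exact virasoroDefect_opL_single_nil m n
  | cons i t =>
  obtain ⟨ht, hi, hti⟩ := isPBW_cons.mp hl
  refine virasoroDefect_apply_eq_zero_of_lt (fun m n hmn => ?_) m n
  by_cases hin : i ≤ n
  · exact virasoroDefect_opL_single_of_headI_le hl hmn (hi.trans hin) hin
  push Not at hin
  have iht (a b : ℤ) := ih t.length (by simp) ht a b rfl
  -- `L b` applied to `single t 1` only produces words covered by the induction hypothesis or the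
  -- shortcut
  have hLt {a b : ℤ} (hab : a < i) (hb : b < i) :
      virasoroDefect (opL h c) c a i (opL h c b (single t 1)) = 0 := by
    refine virasoroDefect_opL_eq_zero_of_mem_supported (fun w hw => ?_)
      (by rw [opL_single ht]; exact actFuel_mem_supported h c _ b ht)
    obtain ⟨hw, hlt | ⟨-, hhead⟩⟩ := hw
    · exact ih w.length (by simpa using hlt) hw a i rfl
    · exact virasoroDefect_opL_single_of_headI_le hw hab hi (hhead.trans (max_le hb.le hti))
  rw [← opL_single_of_headI_le ht hi hti]
  exact virasoroDefect_apply_eq_zero_of_jacobi (iht m n) (iht (m + i) n) (iht m (n + i))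
    (virasoroDefect_opL_single_of_cons hl m) (virasoroDefect_opL_single_of_cons hl n)
    (virasoroDefect_opL_single_of_cons hl (m + n)) (hLt (by omega) hin) (hLt hin (by omega))

variable (h c)

noncomputable def rep : VirasoroRep (List ℤ →₀ ℂ) where
  L := opL h c
  C := opC c
  comm_LL m n := Finsupp.basisSingleOne.ext fun w => by
    simp only [coe_basisSingleOne, LinearMap.sub_apply, LinearMap.add_apply,
      LinearMap.smul_apply, Module.End.mul_apply]
    by_cases hw : IsPBW w
    · rw [virasoroDefect_apply_eq_zero_iff.mp (virasoroDefect_opL_single hw m n), opC_single hw,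
        virasoroCocycle]
      abel
    · simp [opL_single_of_not_isPBW hw, opC_single_of_not_isPBW hw]
  comm_CL n := Finsupp.basisSingleOne.ext fun w => by
    simp only [coe_basisSingleOne, LinearMap.sub_apply, Module.End.mul_apply,
      LinearMap.zero_apply, opC_of_mem_supported (opL_mem_supported n _)]
    by_cases hw : IsPBW w
    · rw [opC_single hw, map_smul, sub_self]
    · rw [opC_single_of_not_isPBW hw, opL_single_of_not_isPBW hw, map_zero, smul_zero, sub_self]

noncomputable def virasoroModule : VirasoroModule := ⟨List ℤ →₀ ℂ, rep h c⟩

lemma rep_isSingular : (rep h c).IsSingular h c (single [] 1) :=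
  ⟨fun _ hn => opL_single_nil_of_neg (by omega), opL_zero_single_nil, opC_single isPBW_nil⟩

lemma rep_monomial {l : List ℤ} (hl : IsPBW l) :
    (rep h c).monomial (single [] 1) l = single l 1 := by
  induction l with
  | nil => rfl
  | cons i t ih =>
    obtain ⟨ht, hi, hti⟩ := isPBW_cons.mp hl
    rw [VirasoroRep.monomial_cons, ih ht]
    exact opL_single_of_headI_le ht hi hti

end VermaModel

lemma IsPBW.map_toNat_cast {l : List ℤ} (hl : IsPBW l) : (l.map Int.toNat).map Nat.cast = l := by
  rw [List.map_map]
  exact List.map_congr_left (fun i hi => Int.toNat_of_nonneg (by linarith [hl.2 i hi])) |>.trans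
    (List.map_id l)

def pbwEquivPartition (n : ℕ) :
    {l : {l : List ℤ // IsPBW l} // (l : List ℤ).sum = n} ≃ n.Partition where
  toFun l :=
    { parts := ((l : List ℤ).map Int.toNat : Multiset ℕ)
      parts_pos := by
        simp only [Multiset.mem_coe, List.mem_map]
        rintro _ ⟨i, hi, rfl⟩
        have := l.1.2.2 i hi
        omega
      parts_sum := by
        rw [Multiset.sum_coe, ← Nat.cast_inj (R := ℤ), Nat.cast_list_sum, l.1.2.map_toNat_cast,
          l.2] }
  invFun p :=
    ⟨⟨(p.parts.map (Nat.cast : ℕ → ℤ)).sort (· ≥ ·), Multiset.pairwise_sort _ _, fun i hi => by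
      obtain ⟨k, hk, rfl⟩ := Multiset.mem_map.mp ((Multiset.mem_sort _).mp hi)
      exact_mod_cast p.parts_pos hk⟩, by
      rw [← Multiset.sum_coe, Multiset.sort_eq, ← Nat.cast_multiset_sum, p.parts_sum]⟩
  left_inv l := by
    ext : 2
    simp only [Multiset.map_coe, l.1.2.map_toNat_cast, Multiset.coe_sort]
    exact List.mergeSort_eq_self _ l.1.2.1
  right_inv p := by
    ext : 1
    simp only [← Multiset.map_coe, Multiset.sort_eq, Multiset.map_map]
    exact (Multiset.map_congr rfl fun k _ => Int.toNat_natCast k).trans p.parts.map_id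

namespace IsVermaModule

variable {h c : ℂ} {M : VirasoroModule} {v : M.carrier}

lemma linearIndependent_monomial (hV : IsVermaModule h c M v) :
    LinearIndependent ℂ fun l : {l // IsPBW l} => M.rep.monomial v l := by
  obtain ⟨f, ⟨hf, hfv⟩, -⟩ :=
    hV.2.2 (VermaModel.virasoroModule h c) _ (VermaModel.rep_isSingular h c)
  have hfm : f ∘ (fun l : {l // IsPBW l} => M.rep.monomial v l) =
      Finsupp.basisSingleOne ∘ Subtype.val := funext fun l => by
    rw [Function.comp_apply, hf.map_monomial, hfv]
    exact VermaModel.rep_monomial h c l.2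
  refine LinearIndependent.of_comp f ?_
  rw [hfm]
  exact Finsupp.basisSingleOne.linearIndependent.comp _ Subtype.val_injective

lemma span_monomial (hV : IsVermaModule h c M v) :
    Submodule.span ℂ (Set.range fun l : {l // IsPBW l} => M.rep.monomial v l) = ⊤ := by
  rw [← hV.1.span_monomial_eq_top hV.2.1, Set.image_eq_range]
  rfl

noncomputable def pbwBasis (hV : IsVermaModule h c M v) :
    Module.Basis {l // IsPBW l} ℂ M.carrier :=
  .mk hV.linearIndependent_monomial hV.span_monomial.ge

end IsVermaModule

/-- In the Verma module `V(h,c)` with distinguished singular vector `v`, the vectors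
`L i₁ · L i₂ · … · L iₖ · v` with `i₁ ≥ i₂ ≥ … ≥ iₖ ≥ 1` form a basis (they are linearly
independent and span); consequently for every `n : ℕ` the eigenspace of `L 0` with eigenvalue
`h + n` has dimension `p(n)`, the number of partitions of `n`. -/
theorem verma_module_pbw_basis (h c : ℂ) (M : VirasoroModule) (v : M.carrier)
    (hV : IsVermaModule h c M v) :
    (LinearIndependent ℂ
        (fun l : {l : List ℤ // l.Pairwise (· ≥ ·) ∧ ∀ i ∈ l, 1 ≤ i} =>
          (l : List ℤ).foldr (fun i x => M.rep.L i x) v) ∧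
      Submodule.span ℂ
        (Set.range (fun l : {l : List ℤ // l.Pairwise (· ≥ ·) ∧ ∀ i ∈ l, 1 ≤ i} =>
          (l : List ℤ).foldr (fun i x => M.rep.L i x) v)) = ⊤) ∧
    ∀ n : ℕ, Module.finrank ℂ (Module.End.eigenspace (M.rep.L 0) (h + (n : ℂ)))
      = Fintype.card (Nat.Partition n) := by
  refine ⟨⟨hV.linearIndependent_monomial, hV.span_monomial⟩, fun n => ?_⟩
  have hweight (l : {l // IsPBW l}) :
      h + ((l : List ℤ).sum : ℂ) = h + n ↔ (l : List ℤ).sum = n := by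
    rw [add_right_inj]
    exact_mod_cast Iff.rfl
  let e := (Equiv.subtypeEquivRight hweight).trans (pbwEquivPartition n)
  have : Fintype {l : {l // IsPBW l} // h + ((l : List ℤ).sum : ℂ) = h + n} := .ofEquiv _ e.symm
  rw [hV.pbwBasis.finrank_eigenspace (μ := fun l => h + ((l : List ℤ).sum : ℂ))
    (fun l => by simpa [IsVermaModule.pbwBasis] using hV.1.L_zero_monomial l.1),
    Fintype.card_congr e]
end

section
/- Let V be a nonzero module of the Virasoro algebra on which C acts as a scalar c, such that V is the direct sum of the generalized eigenspaces of L_0, and such that there exists an eigenvalue h₀ with nonzero generalized eigenspace whose real part is minimal (Re h₀ ≤ Re λ for every eigenvalue λ with nonzero generalized eigenspace). Then V contains a nonzero singular vector, and hence a submodule which is a lowest weight module. -/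
/-! Since `⁅L 0, L n⁆ = n • L n`, the operator `L n` shifts generalized `L 0`-eigenspaces by `n`.
An eigenvector of `L 0` for an eigenvalue `h₀` of minimal real part is therefore killed by every
`L (-n)`, `n ≥ 1`: its image would lie in the generalized eigenspace of `h₀ - n`, which is zero by
minimality. Such an eigenvector exists because a nonzero generalized eigenspace contains an
eigenvector. -/

namespace VirasoroRep

open Module.End

variable {V : Type} [AddCommGroup V] [Module ℂ V] (ρ : VirasoroRep V)

theorem L_zero_mul_sub_mul_L_zero (n : ℤ) :
    ρ.L 0 * ρ.L n - ρ.L n * ρ.L 0 = (n : ℂ) • ρ.L n := by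
  have h := ρ.comm_LL 0 n
  by_cases hn : n = 0
  · subst hn
    simp
  · simpa [hn] using h

theorem semiconjBy_L (n : ℤ) (μ : ℂ) :
    SemiconjBy (ρ.L n) (ρ.L 0 - μ • 1) (ρ.L 0 - (μ + n) • 1) := by
  have h := ρ.L_zero_mul_sub_mul_L_zero n
  unfold SemiconjBy
  rw [sub_eq_iff_eq_add] at h
  simp only [mul_sub, sub_mul, add_smul, add_mul, mul_smul_comm, smul_mul_assoc, mul_one, one_mul, h]
  abel

theorem L_mem_maxGenEigenspace {n : ℤ} {μ : ℂ} {x : V} (hx : x ∈ (ρ.L 0).maxGenEigenspace μ) :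
    ρ.L n x ∈ (ρ.L 0).maxGenEigenspace (μ + n) := by
  obtain ⟨k, hk⟩ := (mem_maxGenEigenspace _ _ _).mp hx
  refine (mem_maxGenEigenspace _ _ _).mpr ⟨k, ?_⟩
  rw [← Module.End.mul_apply, ← ((ρ.semiconjBy_L n μ).pow_right k).eq, Module.End.mul_apply, hk,
    map_zero]

theorem L_neg_eq_zero_of_re_le {μ : ℂ}
    (hmin : ∀ ν : ℂ, (ρ.L 0).maxGenEigenspace ν ≠ ⊥ → μ.re ≤ ν.re)
    {n : ℤ} (hn : 1 ≤ n) {x : V} (hx : x ∈ (ρ.L 0).maxGenEigenspace μ) : ρ.L (-n) x = 0 := by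
  have hbot : (ρ.L 0).maxGenEigenspace (μ + (-n : ℤ)) = ⊥ := by
    by_contra hne
    have := hmin _ hne
    have hn' : (1 : ℝ) ≤ n := by exact_mod_cast hn
    simp only [Int.cast_neg, Complex.add_re, Complex.neg_re, Complex.intCast_re] at this
    linarith
  have hmem := ρ.L_mem_maxGenEigenspace (n := -n) hx
  rwa [hbot, Submodule.mem_bot] at hmem

theorem isSingular_of_re_le {c μ : ℂ} (hC : ∀ x : V, ρ.C x = c • x)
    (hmin : ∀ ν : ℂ, (ρ.L 0).maxGenEigenspace ν ≠ ⊥ → μ.re ≤ ν.re)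
    {v : V} (hv : v ∈ (ρ.L 0).eigenspace μ) : ρ.IsSingular μ c v :=
  ⟨fun _ hn ↦ ρ.L_neg_eq_zero_of_re_le hmin hn (eigenspace_le_maxGenEigenspace hv),
    mem_eigenspace_iff.mp hv, hC v⟩

end VirasoroRep

theorem virasoro_module_has_singular_vector_general
    (V : Type) [AddCommGroup V] [Module ℂ V] (ρ : VirasoroRep V) (c : ℂ)
    (hC : ∀ x : V, ρ.C x = c • x)
    (h₀ : ℂ) (h₀ne : Module.End.maxGenEigenspace (ρ.L 0) h₀ ≠ ⊥)
    (h₀min : ∀ μ : ℂ, Module.End.maxGenEigenspace (ρ.L 0) μ ≠ ⊥ → h₀.re ≤ μ.re) :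
    ∃ v : V, v ≠ 0 ∧ ∃ h' : ℂ, ρ.IsSingular h' c v := by
  have h₀eig : (ρ.L 0).HasEigenvalue h₀ := Module.End.HasUnifEigenvalue.lt zero_lt_one h₀ne
  obtain ⟨v, hv, hv0⟩ := h₀eig.exists_hasEigenvector
  exact ⟨v, hv0, h₀, ρ.isSingular_of_re_le hC h₀min hv⟩

/-- A nonzero Virasoro module on which `C` acts as the scalar `c`, which is the direct sum of
the generalized eigenspaces of `L 0`, and which has an eigenvalue `h₀` (with nonzero
generalized eigenspace) of minimal real part, contains a nonzero singular vector — and hence a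
submodule which is a lowest weight module. -/
theorem virasoro_module_has_singular_vector
    (V : Type) [AddCommGroup V] [Module ℂ V] (ρ : VirasoroRep V) (c : ℂ)
    (hC : ∀ x : V, ρ.C x = c • x)
    (hne : ∃ x : V, x ≠ 0)
    (hsum : ⨆ μ : ℂ, Module.End.maxGenEigenspace (ρ.L 0) μ = ⊤)
    (h₀ : ℂ) (h₀ne : Module.End.maxGenEigenspace (ρ.L 0) h₀ ≠ ⊥)
    (h₀min : ∀ μ : ℂ, Module.End.maxGenEigenspace (ρ.L 0) μ ≠ ⊥ → h₀.re ≤ μ.re) :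
    ∃ v : V, v ≠ 0 ∧ ∃ h' : ℂ, ρ.IsSingular h' c v :=
  virasoro_module_has_singular_vector_general V ρ c hC h₀ h₀ne h₀min
end

section
/- For any given h, c ∈ ℂ there exists a Jordan Verma module Ṽ(h,c) of the Virasoro algebra: a module on which C acts as the scalar c, containing vectors v⁰, v¹ with L_0·v⁰ = h·v⁰, L_0·v¹ = h·v¹ + v⁰, L_{−n}·v⁰ = L_{−n}·v¹ = 0 for all n ≥ 1, generated by v¹ (i.e. Ṽ(h,c) = U(𝔏)·v¹), and universal: for any module W on which C acts as c containing vectors w⁰, w¹ satisfying the same relations, there is a unique 𝔏-module homomorphism Ṽ(h,c) → W mapping v⁰ to w⁰ and v¹ to w¹. Moreover Ṽ(h,c) is unique up to 𝔏-module isomorphism. -/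
/-- `M` together with `v⁰, v¹` is a Jordan Verma module of weight `(h, c)`: `C` acts as the
scalar `c`; `L 0` acts on the two-dimensional space spanned by `v⁰, v¹` as a Jordan block with
eigenvalue `h` (i.e. `L 0 v⁰ = h v⁰` and `L 0 v¹ = h v¹ + v⁰`); both vectors are annihilated
by all `L (-n)`, `n ≥ 1`; `v¹` generates `M`; and the data is universal among all such. -/
def IsJordanVerma (h c : ℂ) (M : VirasoroModule) (v0 v1 : M.carrier) : Prop :=
  (∀ x : M.carrier, M.rep.C x = c • x) ∧
  M.rep.L 0 v0 = h • v0 ∧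
  M.rep.L 0 v1 = h • v1 + v0 ∧
  (∀ n : ℤ, 1 ≤ n → M.rep.L (-n) v0 = 0 ∧ M.rep.L (-n) v1 = 0) ∧
  M.rep.Generates v1 ∧
  ∀ (W : VirasoroModule) (w0 w1 : W.carrier),
    (∀ x : W.carrier, W.rep.C x = c • x) →
    W.rep.L 0 w0 = h • w0 →
    W.rep.L 0 w1 = h • w1 + w0 →
    (∀ n : ℤ, 1 ≤ n → W.rep.L (-n) w0 = 0 ∧ W.rep.L (-n) w1 = 0) →
    ∃! f : M.carrier →ₗ[ℂ] W.carrier,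
      M.rep.IsHom W.rep f ∧ f v0 = w0 ∧ f v1 = w1

/-!
Let `A` be the free algebra on symbols `L n`. The Jordan Verma module is the cyclic module
`A ⧸ J`, with `v¹ = 1` and `v⁰ = (L 0 - h) • 1`, where the left ideal `J` is generated by the
Virasoro relators times arbitrary elements (so that the Virasoro relations hold on all of `A ⧸ J`)
and by the relations `L (-n) v¹ = L (-n) v⁰ = 0`, `(L 0 - h) v⁰ = 0` imposed on `v¹ = 1`.
If `W` carries vectors `w⁰, w¹` with the same relations, then `a ↦ a • w¹` kills `J`, which gives
the universal map; it is unique because `v¹` generates. Uniqueness up to isomorphism is the usual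
argument for universal objects.
-/

open FreeAlgebra (ι)

namespace VirasoroRep

variable {U V W : Type} [AddCommGroup U] [Module ℂ U] [AddCommGroup V] [Module ℂ V]
  [AddCommGroup W] [Module ℂ W]

lemma isHom_id (ρ : VirasoroRep V) : ρ.IsHom ρ LinearMap.id :=
  ⟨fun _ _ => rfl, fun _ => rfl⟩

lemma IsHom.comp {ρ : VirasoroRep U} {σ : VirasoroRep V} {τ : VirasoroRep W}
    {f : U →ₗ[ℂ] V} {g : V →ₗ[ℂ] W} (hf : ρ.IsHom σ f) (hg : σ.IsHom τ g) :
    ρ.IsHom τ (g ∘ₗ f) :=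
  ⟨fun n x => by simp [hf.1 n x, hg.1 n (f x)], fun x => by simp [hf.2 x, hg.2 (f x)]⟩

lemma Generates.hom_ext {ρ : VirasoroRep V} {σ : VirasoroRep W} {v : V} (hv : ρ.Generates v)
    {f g : V →ₗ[ℂ] W} (hf : ρ.IsHom σ f) (hg : ρ.IsHom σ g) (hfg : f v = g v) : f = g := by
  have hinv : ρ.Invariant (LinearMap.eqLocus f g) :=
    ⟨fun n x (hx : f x = g x) => show f (ρ.L n x) = g (ρ.L n x) by rw [hf.1, hg.1, hx],
     fun x (hx : f x = g x) => show f (ρ.C x) = g (ρ.C x) by rw [hf.2, hg.2, hx]⟩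
  exact LinearMap.eqLocus_eq_top.mp (hv _ hinv hfg)

end VirasoroRep

lemma IsJordanVerma.exists_linearEquiv {h c : ℂ} {M N : VirasoroModule}
    {v0 v1 : M.carrier} {w0 w1 : N.carrier}
    (hM : IsJordanVerma h c M v0 v1) (hN : IsJordanVerma h c N w0 w1) :
    ∃ e : M.carrier ≃ₗ[ℂ] N.carrier, M.rep.IsHom N.rep e.toLinearMap ∧ e v0 = w0 ∧ e v1 = w1 := by
  obtain ⟨hMC, hM0, hM1, hMneg, hMgen, hMuniv⟩ := hM
  obtain ⟨hNC, hN0, hN1, hNneg, hNgen, hNuniv⟩ := hN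
  obtain ⟨f, ⟨hf, hf0, hf1⟩, -⟩ := hMuniv N w0 w1 hNC hN0 hN1 hNneg
  obtain ⟨g, ⟨hg, -, hg1⟩, -⟩ := hNuniv M v0 v1 hMC hM0 hM1 hMneg
  have hgf : g ∘ₗ f = LinearMap.id :=
    hMgen.hom_ext (hf.comp hg) M.rep.isHom_id (by simp [hf1, hg1])
  have hfg : f ∘ₗ g = LinearMap.id :=
    hNgen.hom_ext (hg.comp hf) N.rep.isHom_id (by simp [hf1, hg1])
  exact ⟨LinearEquiv.ofLinearMap f g hfg hgf, hf, hf0, hf1⟩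

section CyclicQuotient

variable {R A M : Type} [CommRing R] [Ring A] [Algebra R A] [AddCommGroup M] [Module R M]

lemma FreeAlgebra.smul_mem_of_forall_ι_smul_mem {X N : Type} [AddCommGroup N]
    [Module (FreeAlgebra R X) N] [Module R N] [IsScalarTower R (FreeAlgebra R X) N]
    {p : Submodule R N} (hp : ∀ x, ∀ y ∈ p, ι R (X := X) x • y ∈ p) (a : FreeAlgebra R X) :
    ∀ y ∈ p, a • y ∈ p := by
  induction a with
  | grade0 r => intro y hy; rw [algebraMap_smul]; exact p.smul_mem r hy
  | grade1 x => exact hp x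
  | mul a b ha hb => intro y hy; rw [mul_smul]; exact ha _ (hb y hy)
  | add a b ha hb => intro y hy; rw [add_smul]; exact p.add_mem (ha y hy) (hb y hy)

lemma AlgHom.apply_eq_zero_of_mem_span (φ : A →ₐ[R] Module.End R M) {w : M} {S : Set A}
    (hS : ∀ s ∈ S, φ s w = 0) {a : A} (ha : a ∈ Submodule.span A S) : φ a w = 0 := by
  induction ha using Submodule.span_induction with
  | mem s hs => exact hS s hs
  | zero => simp
  | add a b _ _ ha hb => simp [ha, hb]
  | smul b a _ ha => simp [ha]

noncomputable def Submodule.liftQOfAnnihilates (I : Submodule A A) (φ : A →ₐ[R] Module.End R M)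
    (w : M) (hI : ∀ a ∈ I, φ a w = 0) : (A ⧸ I) →ₗ[R] M :=
  (I.restrictScalars R).liftQ (LinearMap.applyₗ w ∘ₗ φ.toLinearMap) (fun a ha => hI a ha) ∘ₗ
    (Submodule.Quotient.restrictScalarsEquiv R I).symm.toLinearMap

variable {I : Submodule A A} {φ : A →ₐ[R] Module.End R M} {w : M} {hI : ∀ a ∈ I, φ a w = 0}

lemma Submodule.liftQOfAnnihilates_mk (a : A) :
    I.liftQOfAnnihilates φ w hI (Submodule.Quotient.mk a) = φ a w := rfl

lemma Submodule.liftQOfAnnihilates_smul (a : A) (x : A ⧸ I) :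
    I.liftQOfAnnihilates φ w hI (a • x) = φ a (I.liftQOfAnnihilates φ w hI x) := by
  induction x using Submodule.Quotient.induction_on with
  | H b => rw [← Submodule.Quotient.mk_smul, liftQOfAnnihilates_mk, liftQOfAnnihilates_mk,
      smul_eq_mul, map_mul, Module.End.mul_apply]

end CyclicQuotient

/-- `C` is specialised to the scalar `c`, so the free algebra needs no generator for it. -/
noncomputable def virasoroRelator (c : ℂ) (m n : ℤ) : FreeAlgebra ℂ ℤ :=
  ι ℂ m * ι ℂ n - ι ℂ n * ι ℂ m - ((n : ℂ) - m) • ι ℂ (m + n) -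
    algebraMap ℂ _ ((if m + n = 0 then ((n : ℂ) ^ 3 - n) / 12 else 0) * c)

lemma AlgHom.map_virasoroRelator_eq_zero_iff {V : Type} [AddCommGroup V] [Module ℂ V]
    (φ : FreeAlgebra ℂ ℤ →ₐ[ℂ] Module.End ℂ V) (c : ℂ) (m n : ℤ) :
    φ (virasoroRelator c m n) = 0 ↔
      φ (ι ℂ m) * φ (ι ℂ n) - φ (ι ℂ n) * φ (ι ℂ m) =
        ((n : ℂ) - m) • φ (ι ℂ (m + n)) +
          (if m + n = 0 then ((n : ℂ) ^ 3 - n) / 12 else 0) • (c • 1) := by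
  rw [virasoroRelator, map_sub, map_sub, map_sub, map_mul, map_mul, map_smul, AlgHom.commutes,
    Algebra.algebraMap_eq_smul_one, mul_smul, sub_sub, sub_eq_zero]

namespace VirasoroRep

variable {V : Type} [AddCommGroup V] [Module ℂ V]

noncomputable def ofAlgHom (c : ℂ) (φ : FreeAlgebra ℂ ℤ →ₐ[ℂ] Module.End ℂ V)
    (hφ : ∀ m n, φ (virasoroRelator c m n) = 0) : VirasoroRep V where
  L n := φ (ι ℂ n)
  C := c • 1
  comm_LL m n := (φ.map_virasoroRelator_eq_zero_iff c m n).mp (hφ m n)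
  comm_CL n := by rw [smul_mul_assoc, mul_smul_comm, one_mul, mul_one, sub_self]

noncomputable def toAlgHom (σ : VirasoroRep V) : FreeAlgebra ℂ ℤ →ₐ[ℂ] Module.End ℂ V :=
  FreeAlgebra.lift ℂ σ.L

@[simp]
lemma toAlgHom_ι (σ : VirasoroRep V) (n : ℤ) : σ.toAlgHom (ι ℂ n) = σ.L n :=
  FreeAlgebra.lift_ι_apply _ _

lemma toAlgHom_virasoroRelator {σ : VirasoroRep V} {c : ℂ} (hC : ∀ x, σ.C x = c • x)
    (m n : ℤ) : σ.toAlgHom (virasoroRelator c m n) = 0 := by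
  have hC' : σ.C = c • 1 := LinearMap.ext hC
  rw [σ.toAlgHom.map_virasoroRelator_eq_zero_iff, toAlgHom_ι, toAlgHom_ι, toAlgHom_ι, ← hC']
  exact σ.comm_LL m n

end VirasoroRep

namespace JordanVerma

variable (h c : ℂ)

noncomputable abbrev shiftedL0 : FreeAlgebra ℂ ℤ := ι ℂ 0 - algebraMap ℂ _ h

def relators : Set (FreeAlgebra ℂ ℤ) :=
  {x | ∃ m n a, x = virasoroRelator c m n * a} ∪
    {x | ∃ n : ℤ, 1 ≤ n ∧ (x = ι ℂ (-n) ∨ x = ι ℂ (-n) * shiftedL0 h)} ∪ {shiftedL0 h ^ 2}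

abbrev Space : Type := FreeAlgebra ℂ ℤ ⧸ Submodule.span (FreeAlgebra ℂ ℤ) (relators h c)

noncomputable def v1 : Space h c := Submodule.Quotient.mk 1

noncomputable def v0 : Space h c := shiftedL0 h • v1 h c

lemma smul_v1_eq_zero {a : FreeAlgebra ℂ ℤ} (ha : a ∈ relators h c) : a • v1 h c = 0 := by
  rw [v1, ← Submodule.Quotient.mk_smul, smul_eq_mul, mul_one, Submodule.Quotient.mk_eq_zero]
  exact Submodule.subset_span ha

lemma lsmul_virasoroRelator (m n : ℤ) :
    Algebra.lsmul ℂ ℂ (Space h c) (virasoroRelator c m n) = 0 := by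
  refine LinearMap.ext fun x => ?_
  induction x using Submodule.Quotient.induction_on with
  | H a =>
    rw [Algebra.lsmul_apply, ← Submodule.Quotient.mk_smul, LinearMap.zero_apply,
      Submodule.Quotient.mk_eq_zero]
    exact Submodule.subset_span (Or.inl (Or.inl ⟨m, n, a, rfl⟩))

noncomputable def rep : VirasoroRep (Space h c) :=
  .ofAlgHom c (Algebra.lsmul ℂ ℂ (Space h c)) (lsmul_virasoroRelator h c)

noncomputable def virasoroModule : VirasoroModule := ⟨Space h c, rep h c⟩

lemma rep_L (n : ℤ) (x : Space h c) : (rep h c).L n x = ι ℂ n • x := rfl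

lemma rep_C (x : Space h c) : (rep h c).C x = c • x := rfl

lemma generates : (rep h c).Generates (v1 h c) := by
  intro p hp hv1
  refine Submodule.eq_top_iff'.mpr fun x => ?_
  induction x using Submodule.Quotient.induction_on with
  | H a =>
    have hmk : (Submodule.Quotient.mk a : Space h c) = a • v1 h c := by
      rw [v1, ← Submodule.Quotient.mk_smul, smul_eq_mul, mul_one]
    rw [hmk]
    exact FreeAlgebra.smul_mem_of_forall_ι_smul_mem hp.1 a _ hv1

lemma rep_L_zero_v0 : (rep h c).L 0 (v0 h c) = h • v0 h c := by
  rw [rep_L, ← sub_eq_zero, ← algebraMap_smul (FreeAlgebra ℂ ℤ) h (v0 h c), ← sub_smul, v0,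
    smul_smul, ← sq]
  exact smul_v1_eq_zero h c (Or.inr rfl)

lemma rep_L_zero_v1 : (rep h c).L 0 (v1 h c) = h • v1 h c + v0 h c := by
  rw [rep_L, v0, sub_smul, algebraMap_smul, add_sub_cancel]

lemma rep_L_neg (n : ℤ) (hn : 1 ≤ n) :
    (rep h c).L (-n) (v0 h c) = 0 ∧ (rep h c).L (-n) (v1 h c) = 0 := by
  rw [rep_L, rep_L, v0, smul_smul]
  exact ⟨smul_v1_eq_zero h c (Or.inl (Or.inr ⟨n, hn, Or.inr rfl⟩)),
    smul_v1_eq_zero h c (Or.inl (Or.inr ⟨n, hn, Or.inl rfl⟩))⟩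

section Universal

variable {h c} {W : VirasoroModule} {w0 w1 : W.carrier}

lemma toAlgHom_shiftedL0_apply (w : W.carrier) :
    W.rep.toAlgHom (shiftedL0 h) w = W.rep.L 0 w - h • w := by
  simp [Algebra.algebraMap_eq_smul_one]

lemma toAlgHom_apply_eq_zero_of_mem_relators (hC : ∀ x : W.carrier, W.rep.C x = c • x)
    (h0 : W.rep.L 0 w0 = h • w0) (h1 : W.rep.L 0 w1 = h • w1 + w0)
    (hneg : ∀ n : ℤ, 1 ≤ n → W.rep.L (-n) w0 = 0 ∧ W.rep.L (-n) w1 = 0) :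
    ∀ a ∈ relators h c, W.rep.toAlgHom a w1 = 0 := by
  have hw1 : W.rep.toAlgHom (shiftedL0 h) w1 = w0 := by
    rw [toAlgHom_shiftedL0_apply, h1, add_sub_cancel_left]
  have hw0 : W.rep.toAlgHom (shiftedL0 h) w0 = 0 := by
    rw [toAlgHom_shiftedL0_apply, h0, sub_self]
  rintro a ((⟨m, n, b, rfl⟩ | ⟨n, hn, rfl | rfl⟩) | rfl)
  · rw [map_mul, W.rep.toAlgHom_virasoroRelator hC, zero_mul, LinearMap.zero_apply]
  · rw [W.rep.toAlgHom_ι, (hneg n hn).2]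
  · rw [map_mul, Module.End.mul_apply, hw1, W.rep.toAlgHom_ι, (hneg n hn).1]
  · rw [map_pow, sq, Module.End.mul_apply, hw1, hw0]

lemma exists_unique_hom (hC : ∀ x : W.carrier, W.rep.C x = c • x)
    (h0 : W.rep.L 0 w0 = h • w0) (h1 : W.rep.L 0 w1 = h • w1 + w0)
    (hneg : ∀ n : ℤ, 1 ≤ n → W.rep.L (-n) w0 = 0 ∧ W.rep.L (-n) w1 = 0) :
    ∃! f : Space h c →ₗ[ℂ] W.carrier,
      (rep h c).IsHom W.rep f ∧ f (v0 h c) = w0 ∧ f (v1 h c) = w1 := by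
  have hann : ∀ a ∈ Submodule.span _ (relators h c), W.rep.toAlgHom a w1 = 0 := fun _ =>
    W.rep.toAlgHom.apply_eq_zero_of_mem_span (toAlgHom_apply_eq_zero_of_mem_relators hC h0 h1 hneg)
  set f := Submodule.liftQOfAnnihilates _ W.rep.toAlgHom w1 hann
  have hf : (rep h c).IsHom W.rep f :=
    ⟨fun n x => by rw [rep_L, Submodule.liftQOfAnnihilates_smul, VirasoroRep.toAlgHom_ι],
     fun x => by rw [rep_C, map_smul, hC]⟩
  have hf1 : f (v1 h c) = w1 := by
    rw [v1, Submodule.liftQOfAnnihilates_mk, map_one, Module.End.one_apply]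
  have hf0 : f (v0 h c) = w0 := by
    rw [v0, Submodule.liftQOfAnnihilates_smul, hf1, toAlgHom_shiftedL0_apply, h1,
      add_sub_cancel_left]
  refine ⟨f, ⟨hf, hf0, hf1⟩, fun g ⟨hg, _, hg1⟩ => ?_⟩
  exact (generates h c).hom_ext hg hf (hg1.trans hf1.symm)

end Universal

theorem isJordanVerma : IsJordanVerma h c (virasoroModule h c) (v0 h c) (v1 h c) :=
  ⟨rep_C h c, rep_L_zero_v0 h c, rep_L_zero_v1 h c, rep_L_neg h c, generates h c,
    fun _ _ _ => exists_unique_hom⟩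

end JordanVerma

/-- For any `h, c : ℂ` the Jordan Verma module `Ṽ(h,c)` exists, and it is unique up to an
isomorphism of Virasoro modules carrying the distinguished vectors `v⁰, v¹` to the
distinguished vectors. -/
theorem jordan_verma_module_exists_unique (h c : ℂ) :
    (∃ (M : VirasoroModule) (v0 v1 : M.carrier), IsJordanVerma h c M v0 v1) ∧
    (∀ (M N : VirasoroModule) (v0 v1 : M.carrier) (w0 w1 : N.carrier),
      IsJordanVerma h c M v0 v1 → IsJordanVerma h c N w0 w1 →
      ∃ e : M.carrier ≃ₗ[ℂ] N.carrier,
        M.rep.IsHom N.rep e.toLinearMap ∧ e v0 = w0 ∧ e v1 = w1) :=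
  ⟨⟨_, _, _, JordanVerma.isJordanVerma h c⟩, fun _ _ _ _ _ _ hM hN => hM.exists_linearEquiv hN⟩
end

section
/- For q ∈ (0,1) define the convergent series Θ_{0,2}(q) = Σ_{n∈ℤ} q^{2n²}, Θ_{1,2}(q) = Σ_{n∈ℤ} q^{(4n+1)²/8}, and (∂Θ)_{1,2}(q) = Σ_{n∈ℤ} (4n+1)·q^{(4n+1)²/8}. Then the limit as q → 1⁻ of 2·Θ_{0,2}(q) / (Θ_{1,2}(q) + (∂Θ)_{1,2}(q)) exists and equals 2. -/
open scoped Topology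

/-- The Jacobi–Riemann theta function `Θ_{0,2}(q) = Σ_{n ∈ ℤ} q^(2n²)`. -/
noncomputable def Theta02 (q : ℝ) : ℝ :=
  ∑' n : ℤ, q ^ ((2 * (n : ℝ) ^ 2) : ℝ)

/-- The Jacobi–Riemann theta function `Θ_{1,2}(q) = Σ_{n ∈ ℤ} q^((4n+1)²/8)`. -/
noncomputable def Theta12 (q : ℝ) : ℝ :=
  ∑' n : ℤ, q ^ (((4 * (n : ℝ) + 1) ^ 2 / 8) : ℝ)

/-- The affine theta function `(∂Θ)_{1,2}(q) = Σ_{n ∈ ℤ} (4n+1)·q^((4n+1)²/8)`. -/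
noncomputable def dTheta12 (q : ℝ) : ℝ :=
  ∑' n : ℤ, (4 * (n : ℝ) + 1) * q ^ (((4 * (n : ℝ) + 1) ^ 2 / 8) : ℝ)

open Filter Real Set

section Helpers

variable {q : ℝ}

lemma summable_rpow_of_le (hq0 : 0 < q) (hq1 : q < 1) {r : ℕ → ℝ}
    (hr : ∀ k : ℕ, (k : ℝ) ≤ r k) : Summable (fun k : ℕ => q ^ (r k)) := by
  apply Summable.of_nonneg_of_le (fun k => (Real.rpow_pos_of_pos hq0 _).le)
    (fun k => ?_) (summable_geometric_of_lt_one hq0.le hq1)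
  calc q ^ (r k) ≤ q ^ ((k : ℝ)) := Real.rpow_le_rpow_of_exponent_ge hq0 hq1.le (hr k)
    _ = q ^ k := by rw [Real.rpow_natCast]

lemma summable_weight {s : ℝ} (hs0 : 0 ≤ s) (hs1 : s < 1) :
    Summable (fun k : ℕ => (4 * (k : ℝ) + 3) * s ^ k) := by
  have h1 : Summable (fun k : ℕ => (k : ℝ) ^ 1 * s ^ k) :=
    summable_pow_mul_geometric_of_norm_lt_one 1 (by rwa [Real.norm_eq_abs, abs_of_nonneg hs0])
  have h2 : Summable (fun k : ℕ => s ^ k) := summable_geometric_of_lt_one hs0 hs1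
  have := (h1.mul_left 4).add (h2.mul_left 3)
  apply this.congr
  intro k
  ring

lemma abel_step {v : ℕ → ℝ} (hv : Summable v) :
    ∑' k, (v k + v (k + 1)) = 2 * (∑' k, v k) - v 0 := by
  have h1 : Summable (fun k => v (k + 1)) := (summable_nat_add_iff 1).2 hv
  rw [Summable.tsum_add hv h1]
  have h2 := Summable.tsum_eq_zero_add hv
  linarith

lemma telescope_tsum {f : ℕ → ℝ} (hf : Summable f) :
    ∑' n, (f n - f (n + 1)) = f 0 := by
  have h1 : Summable (fun k => f (k + 1)) := (summable_nat_add_iff 1).2 hf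
  rw [Summable.tsum_sub hf h1]
  have h2 := Summable.tsum_eq_zero_add hf
  linarith

lemma rpow_diff_le (hq0 : 0 < q) (hq1 : q < 1) {lo e1 e2 hi : ℝ}
    (h1 : lo ≤ e1) (h2 : e1 ≤ hi) (h3 : lo ≤ e2) (h4 : e2 ≤ hi) :
    |q ^ e1 - q ^ e2| ≤ q ^ lo - q ^ hi := by
  have m1 := Real.rpow_le_rpow_of_exponent_ge hq0 hq1.le h1
  have m2 := Real.rpow_le_rpow_of_exponent_ge hq0 hq1.le h2
  have m3 := Real.rpow_le_rpow_of_exponent_ge hq0 hq1.le h3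
  have m4 := Real.rpow_le_rpow_of_exponent_ge hq0 hq1.le h4
  rw [abs_sub_le_iff]
  constructor <;> linarith

end Helpers

noncomputable section GG



/-- `g(x) = (2x+1) exp(-t(2x+1)²/8)` -/
def gg (t x : ℝ) : ℝ := (2 * x + 1) * Real.exp (-(t * (2 * x + 1) ^ 2) / 8)

def gg1 (t x : ℝ) : ℝ :=
  Real.exp (-(t * (2 * x + 1) ^ 2) / 8) * (2 - t * (2 * x + 1) ^ 2 / 2)

def gg2 (t x : ℝ) : ℝ :=
  Real.exp (-(t * (2 * x + 1) ^ 2) / 8) * (-(t * (2 * x + 1)) * (3 - t * (2 * x + 1) ^ 2 / 4))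

lemma hasDerivAt_u (x : ℝ) : HasDerivAt (fun x : ℝ => 2 * x + 1) 2 x := by
  simpa using ((hasDerivAt_id x).const_mul 2).add_const 1

lemma hasDerivAt_E (t x : ℝ) :
    HasDerivAt (fun x : ℝ => Real.exp (-(t * (2 * x + 1) ^ 2) / 8))
      (Real.exp (-(t * (2 * x + 1) ^ 2) / 8) * (-(t * (2 * x + 1)) / 2)) x := by
  have h1 : HasDerivAt (fun x : ℝ => -(t * (2 * x + 1) ^ 2) / 8)
      (-(t * (2 * (2 * x + 1) * 2)) / 8) x := by
    have := ((((hasDerivAt_u x).pow 2).const_mul t).neg).div_const 8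
    refine this.congr_deriv ?_
    norm_num
  have := h1.exp
  convert this using 1
  ring

lemma hasDerivAt_gg (t x : ℝ) : HasDerivAt (gg t) (gg1 t x) x := by
  have := (hasDerivAt_u x).mul (hasDerivAt_E t x)
  refine this.congr_deriv ?_
  unfold gg1
  ring

lemma hasDerivAt_gg1 (t x : ℝ) : HasDerivAt (gg1 t) (gg2 t x) x := by
  have hP : HasDerivAt (fun x : ℝ => 2 - t * (2 * x + 1) ^ 2 / 2)
      (-(t * (2 * (2 * x + 1) * 2) / 2)) x := by
    have := ((((hasDerivAt_u x).pow 2).const_mul t).div_const 2).const_sub 2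
    refine this.congr_deriv ?_
    norm_num
  have := (hasDerivAt_E t x).mul hP
  refine this.congr_deriv ?_
  unfold gg2
  ring

lemma sqrt_mul_le {v : ℝ} (hv : 0 ≤ v) :
    Real.sqrt v * (3 + v / 4) ≤ 311 * Real.exp (v / 16) := by
  have hs : Real.sqrt v ≤ 1 + v := by
    rw [show (1:ℝ) + v = Real.sqrt ((1 + v) ^ 2) by rw [Real.sqrt_sq (by linarith)]]
    exact Real.sqrt_le_sqrt (by nlinarith)
  have ha := Real.add_one_le_exp (v / 16)
  have h1 : (1:ℝ) ≤ Real.exp (v / 16) := Real.one_le_exp (by positivity)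
  have hb : v ^ 2 / 1024 ≤ Real.exp (v / 16) := by
    have h2 : v / 32 ≤ Real.exp (v / 32) := by
      have := Real.add_one_le_exp (v / 32); linarith
    have h3 : (v / 32) ^ 2 ≤ Real.exp (v / 32) ^ 2 := by
      apply pow_le_pow_left₀ (by positivity) h2
    have h4 : Real.exp (v / 32) ^ 2 = Real.exp (v / 16) := by
      rw [sq, ← Real.exp_add]; ring_nf
    calc v ^ 2 / 1024 = (v / 32) ^ 2 := by ring
      _ ≤ Real.exp (v / 32) ^ 2 := h3
      _ = Real.exp (v / 16) := h4
  have hmul : Real.sqrt v * (3 + v / 4) ≤ (1 + v) * (3 + v / 4) :=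
    mul_le_mul_of_nonneg_right hs (by linarith)
  nlinarith [hmul]

lemma gg2_bound {t : ℝ} (ht : 0 < t) {k : ℕ} {x : ℝ} (hx : (k : ℝ) ≤ x) :
    |gg2 t x| ≤ 311 * Real.sqrt t * Real.exp (-(t * (2 * (k : ℝ) + 1) ^ 2) / 16) := by
  have hk0 : (0:ℝ) ≤ (k : ℝ) := Nat.cast_nonneg k
  have hu0 : (0:ℝ) ≤ 2 * x + 1 := by linarith
  have huk : 2 * (k : ℝ) + 1 ≤ 2 * x + 1 := by linarith
  set u : ℝ := 2 * x + 1 with hu_def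
  set v : ℝ := t * u ^ 2 with hv_def
  have hv0 : (0:ℝ) ≤ v := by positivity
  have htu : 0 ≤ t * u := by positivity
  have h1 : |gg2 t x| = Real.exp (-v / 8) * ((t * u) * |3 - v / 4|) := by
    unfold gg2
    rw [abs_mul, abs_of_pos (Real.exp_pos _), abs_mul, abs_neg, abs_of_nonneg htu]
  have h2 : |3 - v / 4| ≤ 3 + v / 4 := by
    rw [abs_le]; constructor <;> linarith
  have h3 : Real.sqrt t * Real.sqrt v = t * u := by
    rw [hv_def, Real.sqrt_mul ht.le, Real.sqrt_sq hu0, ← mul_assoc,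
      Real.mul_self_sqrt ht.le]
  have key := sqrt_mul_le hv0
  have hE : Real.exp (-v / 8) * Real.exp (v / 16) ≤ Real.exp (-v / 16) := by
    rw [← Real.exp_add]
    apply Real.exp_le_exp.2; linarith
  calc |gg2 t x| = Real.exp (-v / 8) * ((t * u) * |3 - v / 4|) := h1
    _ ≤ Real.exp (-v / 8) * ((t * u) * (3 + v / 4)) := by
        apply mul_le_mul_of_nonneg_left _ (Real.exp_pos _).le
        exact mul_le_mul_of_nonneg_left h2 htu
    _ = Real.exp (-v / 8) * (Real.sqrt t * (Real.sqrt v * (3 + v / 4))) := by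
        rw [← h3]; ring
    _ ≤ Real.exp (-v / 8) * (Real.sqrt t * (311 * Real.exp (v / 16))) := by
        apply mul_le_mul_of_nonneg_left _ (Real.exp_pos _).le
        exact mul_le_mul_of_nonneg_left key (Real.sqrt_nonneg t)
    _ = 311 * Real.sqrt t * (Real.exp (-v / 8) * Real.exp (v / 16)) := by ring
    _ ≤ 311 * Real.sqrt t * Real.exp (-v / 16) := by
        apply mul_le_mul_of_nonneg_left hE (by positivity)
    _ ≤ 311 * Real.sqrt t * Real.exp (-(t * (2 * (k : ℝ) + 1) ^ 2) / 16) := by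
        apply mul_le_mul_of_nonneg_left _ (by positivity)
        apply Real.exp_le_exp.2
        have hvge : t * (2 * (k : ℝ) + 1) ^ 2 ≤ v := by
          rw [hv_def]
          apply mul_le_mul_of_nonneg_left _ ht.le
          nlinarith
        linarith

lemma diff2_bound {t : ℝ} (ht : 0 < t) (k : ℕ) :
    |(gg t k - gg t ((k : ℝ) + 1)) - (gg t ((k : ℝ) + 1) - gg t ((k : ℝ) + 2))| ≤
      311 * Real.sqrt t * Real.exp (-(t * (2 * (k : ℝ) + 1) ^ 2) / 16) := by
  set M : ℝ := 311 * Real.sqrt t * Real.exp (-(t * (2 * (k : ℝ) + 1) ^ 2) / 16) with hM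
  have step1 : ∀ x ∈ Icc (k : ℝ) ((k : ℝ) + 1), |gg1 t x - gg1 t (x + 1)| ≤ M := by
    intro x hx
    have hd : ∀ y ∈ Icc x (x + 1), HasDerivWithinAt (gg1 t) (gg2 t y) (Icc x (x + 1)) y :=
      fun y _ => (hasDerivAt_gg1 t y).hasDerivWithinAt
    have hb : ∀ y ∈ Icc x (x + 1), ‖gg2 t y‖ ≤ M := by
      intro y hy
      rw [Real.norm_eq_abs]
      exact gg2_bound ht (le_trans hx.1 hy.1)
    have h := (convex_Icc x (x + 1)).norm_image_sub_le_of_norm_hasDerivWithin_le hd hb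
      (left_mem_Icc.2 (by linarith)) (right_mem_Icc.2 (by linarith))
    rw [Real.norm_eq_abs, Real.norm_eq_abs] at h
    have : |x + 1 - x| = 1 := by norm_num
    rw [this, mul_one] at h
    rw [abs_sub_comm]
    exact h
  have hh : ∀ x : ℝ, HasDerivAt (fun y => gg t y - gg t (y + 1))
      (gg1 t x - gg1 t (x + 1)) x := by
    intro x
    have h2 : HasDerivAt (fun y : ℝ => gg t (y + 1)) (gg1 t (x + 1)) x := by
      have := (hasDerivAt_gg t (x + 1)).comp x ((hasDerivAt_id x).add_const 1)
      simp at this; exact this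
    exact (hasDerivAt_gg t x).sub h2
  have hd : ∀ y ∈ Icc (k : ℝ) ((k : ℝ) + 1),
      HasDerivWithinAt (fun y => gg t y - gg t (y + 1))
        (gg1 t y - gg1 t (y + 1)) (Icc (k : ℝ) ((k : ℝ) + 1)) y :=
    fun y _ => (hh y).hasDerivWithinAt
  have h := (convex_Icc (k : ℝ) ((k : ℝ) + 1)).norm_image_sub_le_of_norm_hasDerivWithin_le hd
    (fun y hy => by rw [Real.norm_eq_abs]; exact step1 y hy)
    (left_mem_Icc.2 (by linarith)) (right_mem_Icc.2 (by linarith))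
  rw [Real.norm_eq_abs, Real.norm_eq_abs] at h
  have he : |(k : ℝ) + 1 - (k : ℝ)| = 1 := by norm_num
  rw [he, mul_one] at h
  rw [abs_sub_comm]
  convert h using 3
  ring

lemma gg_nonneg {t : ℝ} {x : ℝ} (hx : 0 ≤ x) : 0 ≤ gg t x := by
  unfold gg; positivity

lemma exp_pow_le {c : ℝ} {r : ℝ} {k : ℕ} (hr : c * k ≤ r) :
    Real.exp (-r) ≤ Real.exp (-c) ^ k := by
  rw [← Real.exp_nat_mul]
  apply Real.exp_le_exp.2
  have : (k : ℝ) * -c = -(c * k) := by ring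
  rw [this]
  linarith

lemma summable_gg {t : ℝ} (ht : 0 < t) : Summable (fun k : ℕ => gg t k) := by
  have hs1 : Real.exp (-(t / 2)) < 1 := Real.exp_lt_one_iff.2 (by linarith)
  have hle : ∀ k : ℕ, gg t k ≤ (4 * (k : ℝ) + 3) * Real.exp (-(t / 2)) ^ k := by
    intro k
    have h1 : Real.exp (-(t * (2 * (k : ℝ) + 1) ^ 2) / 8) ≤ Real.exp (-(t / 2)) ^ k := by
      rw [show -(t * (2 * (k : ℝ) + 1) ^ 2) / 8 = -(t * (2 * (k : ℝ) + 1) ^ 2 / 8) by ring]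
      apply exp_pow_le
      rw [div_mul_eq_mul_div, div_le_div_iff₀ (by norm_num) (by norm_num)]
      nlinarith [mul_nonneg ht.le (sq_nonneg ((k:ℝ))), ht.le, Nat.cast_nonneg (α := ℝ) k]
    have h2 : (0:ℝ) ≤ 2 * (k:ℝ) + 1 := by positivity
    unfold gg
    calc (2 * (k : ℝ) + 1) * Real.exp (-(t * (2 * (k : ℝ) + 1) ^ 2) / 8)
        ≤ (2 * (k : ℝ) + 1) * Real.exp (-(t / 2)) ^ k :=
          mul_le_mul_of_nonneg_left h1 h2
      _ ≤ (4 * (k : ℝ) + 3) * Real.exp (-(t / 2)) ^ k := by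
          apply mul_le_mul_of_nonneg_right _ (by positivity)
          linarith [Nat.cast_nonneg (α := ℝ) k]
  exact Summable.of_nonneg_of_le (fun k => gg_nonneg (Nat.cast_nonneg k)) hle
    (summable_weight (Real.exp_pos _).le hs1)

lemma summable_expM {t : ℝ} (ht : 0 < t) :
    Summable (fun k : ℕ => Real.exp (-(t * (2 * (k : ℝ) + 1) ^ 2) / 16)) := by
  have hs1 : Real.exp (-(t / 4)) < 1 := Real.exp_lt_one_iff.2 (by linarith)
  apply Summable.of_nonneg_of_le (fun k => (Real.exp_pos _).le) (fun k => ?_)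
    (summable_geometric_of_lt_one (Real.exp_pos _).le hs1)
  rw [show -(t * (2 * (k : ℝ) + 1) ^ 2) / 16 = -(t * (2 * (k : ℝ) + 1) ^ 2 / 16) by ring]
  apply exp_pow_le
  rw [div_mul_eq_mul_div, div_le_div_iff₀ (by norm_num) (by norm_num)]
  nlinarith [mul_nonneg ht.le (sq_nonneg ((k:ℝ))), ht.le, Nat.cast_nonneg (α := ℝ) k]

lemma summable_expsq {t : ℝ} (ht : 0 < t) :
    Summable (fun k : ℕ => Real.exp (-(t * (k : ℝ) ^ 2) / 4)) := by
  have hs1 : Real.exp (-(t / 4)) < 1 := Real.exp_lt_one_iff.2 (by linarith)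
  apply Summable.of_nonneg_of_le (fun k => (Real.exp_pos _).le) (fun k => ?_)
    (summable_geometric_of_lt_one (Real.exp_pos _).le hs1)
  rw [show -(t * (k : ℝ) ^ 2) / 4 = -(t * (k : ℝ) ^ 2 / 4) by ring]
  apply exp_pow_le
  rw [div_mul_eq_mul_div, div_le_div_iff₀ (by norm_num) (by norm_num)]
  have h1 : (k : ℝ) ≤ (k : ℝ) ^ 2 := by
    have := Nat.le_self_pow (two_ne_zero) k
    exact_mod_cast Nat.cast_le.2 this
  nlinarith [ht.le, mul_le_mul_of_nonneg_left h1 ht.le]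

lemma tsum_exp_shift_le {t : ℝ} (ht : 0 < t) :
    ∑' k : ℕ, Real.exp (-(t * ((k : ℝ) + 1) ^ 2) / 4) ≤ 2 * Real.sqrt π / Real.sqrt t := by
  apply Real.tsum_le_of_sum_range_le (fun n => (Real.exp_pos _).le)
  intro n
  set f : ℝ → ℝ := fun x => Real.exp (-(t / 4) * x ^ 2) with hf
  have hanti : AntitoneOn f (Icc (0:ℝ) (0 + n)) := by
    intro a ha b hb hab
    apply Real.exp_le_exp.2
    have ha0 : 0 ≤ a := ha.1
    have h2 : a ^ 2 ≤ b ^ 2 := by nlinarith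
    nlinarith [mul_le_mul_of_nonneg_left h2 (by positivity : (0:ℝ) ≤ t / 4)]
  have hint := hanti.sum_le_integral
  have hsum_eq : ∑ i ∈ Finset.range n, Real.exp (-(t * ((i : ℝ) + 1) ^ 2) / 4)
      = ∑ i ∈ Finset.range n, f (0 + (i + 1 : ℕ)) := by
    apply Finset.sum_congr rfl
    intro i _
    rw [hf]
    push_cast
    ring_nf
  rw [hsum_eq]
  refine hint.trans ?_
  have h0n : (0:ℝ) ≤ 0 + (n:ℝ) := by positivity
  rw [intervalIntegral.integral_of_le h0n]
  have hInt : MeasureTheory.Integrable f := by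
    rw [hf]; exact integrable_exp_neg_mul_sq (by positivity)
  have hle := MeasureTheory.setIntegral_le_integral (s := Ioc (0:ℝ) (0 + n)) hInt
    (Filter.Eventually.of_forall (fun x => (Real.exp_pos _).le))
  refine hle.trans ?_
  rw [hf]
  rw [integral_gaussian (t / 4)]
  rw [show π / (t / 4) = 4 * π / t by ring]
  rw [Real.sqrt_div' (4 * π) ht.le]
  rw [show (4:ℝ) * π = 2 ^ 2 * π by norm_num]
  rw [Real.sqrt_mul (by positivity) π, Real.sqrt_sq (by norm_num)]

lemma tsum_M_le {t : ℝ} (ht0 : 0 < t) (ht1 : t ≤ 1) :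
    ∑' k : ℕ, 311 * Real.sqrt t * Real.exp (-(t * (2 * (k : ℝ) + 1) ^ 2) / 16) ≤ 1600 := by
  have hst : 0 < Real.sqrt t := Real.sqrt_pos.2 ht0
  rw [tsum_mul_left]
  have hbound : ∑' k : ℕ, Real.exp (-(t * (2 * (k : ℝ) + 1) ^ 2) / 16)
      ≤ 1 + 2 * Real.sqrt π / Real.sqrt t := by
    have hle1 : ∑' k : ℕ, Real.exp (-(t * (2 * (k : ℝ) + 1) ^ 2) / 16)
        ≤ ∑' k : ℕ, Real.exp (-(t * (k : ℝ) ^ 2) / 4) := by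
      apply Summable.tsum_le_tsum _ (summable_expM ht0) (summable_expsq ht0)
      intro k
      apply Real.exp_le_exp.2
      have : (0:ℝ) ≤ k := Nat.cast_nonneg k
      rw [div_le_div_iff₀ (by norm_num) (by norm_num)]
      nlinarith [ht0.le]
    refine hle1.trans ?_
    rw [Summable.tsum_eq_zero_add (summable_expsq ht0)]
    have h0 : Real.exp (-(t * ((0:ℕ) : ℝ) ^ 2) / 4) = 1 := by norm_num
    rw [h0]
    have := tsum_exp_shift_le ht0
    have heq : ∑' k : ℕ, Real.exp (-(t * ((k + 1 : ℕ) : ℝ) ^ 2) / 4)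
        = ∑' k : ℕ, Real.exp (-(t * ((k : ℝ) + 1) ^ 2) / 4) := by
      apply tsum_congr; intro k; push_cast; ring_nf
    rw [heq]
    linarith
  calc 311 * Real.sqrt t * ∑' k : ℕ, Real.exp (-(t * (2 * (k : ℝ) + 1) ^ 2) / 16)
      ≤ 311 * Real.sqrt t * (1 + 2 * Real.sqrt π / Real.sqrt t) := by
        apply mul_le_mul_of_nonneg_left hbound (by positivity)
    _ = 311 * Real.sqrt t + 622 * Real.sqrt π * (Real.sqrt t / Real.sqrt t) := by ring
    _ = 311 * Real.sqrt t + 622 * Real.sqrt π := by rw [div_self hst.ne', mul_one]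
    _ ≤ 311 * 1 + 622 * 2 := by
        have h1 : Real.sqrt t ≤ 1 := by
          rw [show (1:ℝ) = Real.sqrt 1 by rw [Real.sqrt_one]]
          exact Real.sqrt_le_sqrt ht1
        have h2 : Real.sqrt π ≤ 2 := by
          rw [show (2:ℝ) = Real.sqrt 4 by
            rw [show (4:ℝ) = 2 ^ 2 by norm_num, Real.sqrt_sq]; norm_num]
          exact Real.sqrt_le_sqrt (by linarith [Real.pi_le_four])
        linarith
    _ ≤ 1600 := by norm_num

lemma abs_alt_sum_le {t : ℝ} (ht0 : 0 < t) (ht1 : t ≤ 1) :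
    |∑' k : ℕ, (-1 : ℝ) ^ k * gg t k| ≤ 500 := by
  set v : ℕ → ℝ := fun k => (-1 : ℝ) ^ k * gg t k with hv_def
  have hnorm : (fun k : ℕ => ‖v k‖) = fun k : ℕ => gg t k := by
    funext k
    rw [hv_def]
    rw [norm_mul, norm_pow, norm_neg, norm_one, one_pow, one_mul, Real.norm_eq_abs,
      abs_of_nonneg (gg_nonneg (Nat.cast_nonneg k))]
  have sv : Summable v := Summable.of_norm (by rw [hnorm]; exact summable_gg ht0)
  set w : ℕ → ℝ := fun k => v k + v (k + 1) with hw_def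
  have sw : Summable w := sv.add ((summable_nat_add_iff 1).2 sv)
  have hA1 : ∑' k, w k = 2 * (∑' k, v k) - v 0 := abel_step sv
  have hA2 : ∑' k, (w k + w (k + 1)) = 2 * (∑' k, w k) - w 0 := abel_step sw
  set M : ℕ → ℝ := fun k => 311 * Real.sqrt t * Real.exp (-(t * (2 * (k : ℝ) + 1) ^ 2) / 16)
    with hM_def
  have sM : Summable M := (summable_expM ht0).mul_left _
  have habsk : ∀ k : ℕ, |w k + w (k + 1)| ≤ M k := by
    intro k
    have hwk : w k + w (k + 1) = (-1 : ℝ) ^ k *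
        ((gg t k - gg t ((k : ℝ) + 1)) - (gg t ((k : ℝ) + 1) - gg t ((k : ℝ) + 2))) := by
      rw [hw_def, hv_def]
      have c1 : ((k + 1 : ℕ) : ℝ) = (k : ℝ) + 1 := by push_cast; ring
      have c2 : ((k + 1 + 1 : ℕ) : ℝ) = (k : ℝ) + 2 := by push_cast; ring
      simp only [c1, c2, pow_succ]
      ring
    rw [hwk, abs_mul, abs_pow, abs_neg, abs_one, one_pow, one_mul]
    exact diff2_bound ht0 k
  have habs2 : |∑' k, (w k + w (k + 1))| ≤ 1600 := by
    have hsumw2 : Summable (fun k => w k + w (k + 1)) :=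
      sw.add ((summable_nat_add_iff 1).2 sw)
    have h1 : |∑' k, (w k + w (k + 1))| ≤ ∑' k, |w k + w (k + 1)| := by
      have := norm_tsum_le_tsum_norm (f := fun k => w k + w (k + 1)) ?_
      · simpa using this
      · apply Summable.of_nonneg_of_le (fun k => norm_nonneg _) _ sM
        intro k
        rw [Real.norm_eq_abs]
        exact habsk k
    refine h1.trans ?_
    have h2 : ∑' k, |w k + w (k + 1)| ≤ ∑' k, M k := by
      apply Summable.tsum_le_tsum habsk _ sM
      exact hsumw2.abs
    exact h2.trans (tsum_M_le ht0 ht1)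
  -- 4 A = A2 + 3 v 0 + v 1
  have hv0 : v 0 = gg t 0 := by rw [hv_def]; norm_num
  have hv1 : v 1 = -gg t 1 := by rw [hv_def]; norm_num
  have hg0 : 0 ≤ gg t 0 ∧ gg t 0 ≤ 1 := by
    constructor
    · exact gg_nonneg le_rfl
    · unfold gg
      rw [show (2 * (0:ℝ) + 1) = 1 by norm_num]
      simpa using Real.exp_le_one_iff.2 (by nlinarith)
  have hg1 : 0 ≤ gg t 1 ∧ gg t 1 ≤ 3 := by
    constructor
    · exact gg_nonneg (by norm_num)
    · unfold gg
      rw [show (2 * (1:ℝ) + 1) = 3 by norm_num]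
      nlinarith [Real.exp_le_one_iff.2 (show -(t * 3 ^ 2) / 8 ≤ 0 by nlinarith),
        Real.exp_pos (-(t * 3 ^ 2) / 8)]
  have hw0 : w 0 = v 0 + v 1 := by rw [hw_def]
  have h4A : 4 * (∑' k, v k) = ∑' k, (w k + w (k + 1)) + 3 * v 0 + v 1 := by
    rw [hA2, hA1, hw0]
    ring
  have habs : |4 * (∑' k, v k)| ≤ 1600 + 3 * 1 + 3 := by
    rw [h4A]
    have t1 : |∑' k, (w k + w (k + 1)) + 3 * v 0 + v 1|
        ≤ |∑' k, (w k + w (k + 1))| + |3 * v 0| + |v 1| := by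
      calc |∑' k, (w k + w (k + 1)) + 3 * v 0 + v 1|
          ≤ |∑' k, (w k + w (k + 1)) + 3 * v 0| + |v 1| := abs_add_le _ _
        _ ≤ |∑' k, (w k + w (k + 1))| + |3 * v 0| + |v 1| := by
            linarith [abs_add_le (∑' k, (w k + w (k + 1))) (3 * v 0)]
    have t2 : |3 * v 0| ≤ 3 * 1 := by
      rw [hv0, abs_mul]
      have : |gg t 0| = gg t 0 := abs_of_nonneg hg0.1
      rw [this]
      norm_num
      linarith [hg0.2]
    have t3 : |v 1| ≤ 3 := by
      rw [hv1, abs_neg, abs_of_nonneg hg1.1]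
      exact hg1.2
    linarith
  rw [abs_mul] at habs
  have : |(4:ℝ)| = 4 := by norm_num
  rw [this] at habs
  linarith

set_option maxHeartbeats 1000000 in
lemma dTheta12_eq {q : ℝ} (hq0 : 0 < q) (hq1 : q < 1) :
    dTheta12 q = ∑' k : ℕ, (-1 : ℝ) ^ k * gg (-Real.log q) k := by
  set t : ℝ := -Real.log q with ht_def
  have hlog : Real.log q < 0 := Real.log_neg hq0 hq1
  have ht : 0 < t := by rw [ht_def]; linarith
  set v : ℕ → ℝ := fun k => (-1 : ℝ) ^ k * gg t k with hv_def
  have hnorm : (fun k : ℕ => ‖v k‖) = fun k : ℕ => gg t k := by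
    funext k
    rw [hv_def]
    rw [norm_mul, norm_pow, norm_neg, norm_one, one_pow, one_mul, Real.norm_eq_abs,
      abs_of_nonneg (gg_nonneg (Nat.cast_nonneg k))]
  have sv : Summable v := Summable.of_norm (by rw [hnorm]; exact summable_gg ht)
  have he : Summable (fun k => v (2 * k)) :=
    sv.comp_injective (fun a b h => by omega)
  have ho : Summable (fun k => v (2 * k + 1)) :=
    sv.comp_injective (fun a b h => by omega)
  have hEO : HasSum v ((∑' k, v (2 * k)) + ∑' k, v (2 * k + 1)) :=
    HasSum.even_add_odd he.hasSum ho.hasSum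
  have hqpow : ∀ x : ℝ, q ^ x = Real.exp (-(t * x)) := by
    intro x
    rw [Real.rpow_def_of_pos hq0, ht_def]
    congr 1
    ring
  set f : ℤ → ℝ := fun m : ℤ => (4 * (m : ℝ) + 1) * q ^ (((4 * (m : ℝ) + 1) ^ 2 / 8) : ℝ)
    with hf_def
  have e1 : (fun n : ℕ => f (n : ℤ)) = fun k => v (2 * k) := by
    funext n
    rw [hf_def, hv_def]
    have hsign : ((-1 : ℝ)) ^ (2 * n) = 1 := by rw [pow_mul]; norm_num
    show _ = (-1 : ℝ) ^ (2 * n) * gg t ((2 * n : ℕ) : ℝ)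
    rw [hsign, one_mul]
    have hc : ((2 * n : ℕ) : ℝ) = 2 * (n : ℝ) := by push_cast; ring
    rw [hc]
    unfold gg
    beta_reduce
    rw [hqpow]
    have hc2 : (((n : ℤ) : ℝ)) = (n : ℝ) := by push_cast; ring
    rw [hc2]
    have hc3 : 2 * (2 * (n : ℝ)) + 1 = 4 * (n : ℝ) + 1 := by ring
    rw [hc3]
    congr 1
    ring
  have e2 : (fun n : ℕ => f (-((n : ℤ) + 1))) = fun k => v (2 * k + 1) := by
    funext n
    rw [hf_def, hv_def]
    have hsign : ((-1 : ℝ)) ^ (2 * n + 1) = -1 := by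
      rw [pow_succ, pow_mul]; norm_num
    show _ = (-1 : ℝ) ^ (2 * n + 1) * gg t ((2 * n + 1 : ℕ) : ℝ)
    rw [hsign]
    have hc : ((2 * n + 1 : ℕ) : ℝ) = 2 * (n : ℝ) + 1 := by push_cast; ring
    rw [hc]
    unfold gg
    beta_reduce
    rw [hqpow]
    have hc2 : ((-((n : ℤ) + 1) : ℤ) : ℝ) = -((n : ℝ) + 1) := by push_cast; ring
    rw [hc2]
    have hc3 : 4 * -((n : ℝ) + 1) + 1 = -(2 * (2 * (n : ℝ) + 1) + 1) := by ring
    rw [hc3]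
    have hc4 : ((-(2 * (2 * (n : ℝ) + 1) + 1)) ^ 2 / 8 : ℝ)
        = ((2 * (2 * (n : ℝ) + 1) + 1) ^ 2 / 8 : ℝ) := by ring
    rw [hc4]
    have hc5 : -(t * ((2 * (2 * (n : ℝ) + 1) + 1) ^ 2 / 8))
        = -(t * (2 * (2 * (n : ℝ) + 1) + 1) ^ 2) / 8 := by ring
    rw [hc5]
    ring
  have h1 : HasSum (fun n : ℕ => f (n : ℤ)) (∑' k, v (2 * k)) := by
    rw [e1]; exact he.hasSum
  have h2 : HasSum (fun n : ℕ => f (-((n : ℤ) + 1))) (∑' k, v (2 * k + 1)) := by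
    rw [e2]; exact ho.hasSum
  have hf := h1.of_nat_of_neg_add_one h2
  rw [dTheta12]
  rw [hf.tsum_eq, hEO.tsum_eq]

variable {q : ℝ}

lemma natsq_le (n : ℕ) : (n : ℝ) ≤ (n : ℝ) ^ 2 := by
  have := Nat.le_self_pow (two_ne_zero) n
  exact_mod_cast Nat.cast_le.2 this

lemma theta12_hasSum (hq0 : 0 < q) (hq1 : q < 1) :
    HasSum (fun n : ℤ => q ^ (((4 * (n : ℝ) + 1) ^ 2 / 8) : ℝ))
      ((∑' n : ℕ, q ^ (((4 * (n : ℝ) + 1) ^ 2 / 8) : ℝ)) +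
        ∑' n : ℕ, q ^ (((4 * (n : ℝ) + 3) ^ 2 / 8) : ℝ)) := by
  have s1 : Summable (fun n : ℕ => q ^ (((4 * (n : ℝ) + 1) ^ 2 / 8) : ℝ)) := by
    apply summable_rpow_of_le hq0 hq1
    intro n
    nlinarith [natsq_le n, Nat.cast_nonneg (α := ℝ) n]
  have s2 : Summable (fun n : ℕ => q ^ (((4 * (n : ℝ) + 3) ^ 2 / 8) : ℝ)) := by
    apply summable_rpow_of_le hq0 hq1
    intro n
    nlinarith [natsq_le n, Nat.cast_nonneg (α := ℝ) n]
  set f : ℤ → ℝ := fun m : ℤ => q ^ (((4 * (m : ℝ) + 1) ^ 2 / 8) : ℝ) with hf_def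
  have e1 : (fun n : ℕ => f (n : ℤ)) = fun n : ℕ => q ^ (((4 * (n : ℝ) + 1) ^ 2 / 8) : ℝ) := by
    funext n
    rw [hf_def]
    beta_reduce
    norm_num
  have e2 : (fun n : ℕ => f (-((n : ℤ) + 1))) =
      fun n : ℕ => q ^ (((4 * (n : ℝ) + 3) ^ 2 / 8) : ℝ) := by
    funext n
    rw [hf_def]
    beta_reduce
    congr 1
    push_cast
    ring
  have h1 : HasSum (fun n : ℕ => f (n : ℤ))
      (∑' n : ℕ, q ^ (((4 * (n : ℝ) + 1) ^ 2 / 8) : ℝ)) := by rw [e1]; exact s1.hasSum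
  have h2 : HasSum (fun n : ℕ => f (-((n : ℤ) + 1)))
      (∑' n : ℕ, q ^ (((4 * (n : ℝ) + 3) ^ 2 / 8) : ℝ)) := by rw [e2]; exact s2.hasSum
  exact h1.of_nat_of_neg_add_one h2

lemma theta12_ge (hq0 : 0 < q) (hq1 : q < 1) (N : ℕ) :
    (N : ℝ) * q ^ (((4 * (N : ℝ) + 1) ^ 2 / 8) : ℝ) ≤ Theta12 q := by
  have hs := theta12_hasSum hq0 hq1
  have hT : Theta12 q = _ := hs.tsum_eq
  rw [Theta12] at hT
  rw [Theta12, hT]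
  have hP2 : 0 ≤ ∑' n : ℕ, q ^ (((4 * (n : ℝ) + 3) ^ 2 / 8) : ℝ) :=
    tsum_nonneg (fun n => (Real.rpow_pos_of_pos hq0 _).le)
  have s1 : Summable (fun n : ℕ => q ^ (((4 * (n : ℝ) + 1) ^ 2 / 8) : ℝ)) := by
    apply summable_rpow_of_le hq0 hq1
    intro n
    nlinarith [natsq_le n, Nat.cast_nonneg (α := ℝ) n]
  have hpart : ∑ i ∈ Finset.range N, q ^ (((4 * (i : ℝ) + 1) ^ 2 / 8) : ℝ)
      ≤ ∑' n : ℕ, q ^ (((4 * (n : ℝ) + 1) ^ 2 / 8) : ℝ) :=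
    Summable.sum_le_tsum _ (fun i _ => (Real.rpow_pos_of_pos hq0 _).le) s1
  have hlow : (N : ℝ) * q ^ (((4 * (N : ℝ) + 1) ^ 2 / 8) : ℝ)
      ≤ ∑ i ∈ Finset.range N, q ^ (((4 * (i : ℝ) + 1) ^ 2 / 8) : ℝ) := by
    have := Finset.card_nsmul_le_sum (Finset.range N)
      (fun i => q ^ (((4 * (i : ℝ) + 1) ^ 2 / 8) : ℝ)) (q ^ (((4 * (N : ℝ) + 1) ^ 2 / 8) : ℝ))
      (fun i hi => by
        apply Real.rpow_le_rpow_of_exponent_ge hq0 hq1.le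
        have hiN : (i : ℝ) ≤ (N : ℝ) := by
          exact_mod_cast Nat.cast_le.2 (le_of_lt (Finset.mem_range.1 hi))
        nlinarith [Nat.cast_nonneg (α := ℝ) i])
    rw [Finset.card_range, nsmul_eq_mul] at this
    exact this
  linarith

lemma theta12_pos (hq0 : 0 < q) (hq1 : q < 1) : 0 < Theta12 q := by
  have h := theta12_ge hq0 hq1 1
  have : (0:ℝ) < (1 : ℝ) * q ^ (((4 * ((1:ℕ) : ℝ) + 1) ^ 2 / 8) : ℝ) := by
    rw [one_mul]
    exact Real.rpow_pos_of_pos hq0 _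
  calc (0:ℝ) < (1 : ℝ) * q ^ (((4 * ((1:ℕ) : ℝ) + 1) ^ 2 / 8) : ℝ) := this
    _ ≤ Theta12 q := by exact_mod_cast h

lemma theta02_summable (hq0 : 0 < q) (hq1 : q < 1) :
    Summable (fun n : ℤ => q ^ ((2 * (n : ℝ) ^ 2) : ℝ)) := by
  have s1 : Summable (fun n : ℕ => q ^ ((2 * (n : ℝ) ^ 2) : ℝ)) := by
    apply summable_rpow_of_le hq0 hq1
    intro n
    nlinarith [natsq_le n, Nat.cast_nonneg (α := ℝ) n]
  apply Summable.of_nat_of_neg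
  · apply s1.congr
    intro n
    norm_num
  · apply s1.congr
    intro n
    congr 1
    push_cast
    ring

lemma theta_diff_bound (hq0 : 0 < q) (hq1 : q < 1) :
    |Theta02 q - Theta12 q| ≤ 2 := by
  have s02 := theta02_summable hq0 hq1
  have hs12 := (theta12_hasSum hq0 hq1).summable
  set d : ℤ → ℝ := fun n =>
    q ^ ((2 * (n : ℝ) ^ 2) : ℝ) - q ^ (((4 * (n : ℝ) + 1) ^ 2 / 8) : ℝ) with hd_def
  have sd : Summable d := s02.sub hs12
  have hsub : Theta02 q - Theta12 q = ∑' n : ℤ, d n := by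
    rw [Theta02, Theta12, hd_def, Summable.tsum_sub s02 hs12]
  -- majorant for |d|
  have sF : Summable (fun n : ℕ => q ^ ((2 * (n : ℝ) ^ 2) : ℝ)) := by
    apply summable_rpow_of_le hq0 hq1
    intro n
    nlinarith [natsq_le n, Nat.cast_nonneg (α := ℝ) n]
  set F : ℕ → ℝ := fun n => q ^ ((2 * (n : ℝ) ^ 2) : ℝ) with hF_def
  set D : ℕ → ℝ := fun n => F n - F (n + 1) with hD_def
  have hcast : ∀ n : ℕ, ((n + 1 : ℕ) : ℝ) = (n : ℝ) + 1 := by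
    intro n; push_cast; ring
  have hb1 : ∀ n : ℕ, |d (n : ℤ)| ≤ D n := by
    intro n
    rw [hd_def, hD_def, hF_def]
    beta_reduce
    have hc : (((n : ℤ) : ℝ)) = (n : ℝ) := by push_cast; ring
    rw [hc, hcast n]
    apply rpow_diff_le hq0 hq1 le_rfl
    · nlinarith [Nat.cast_nonneg (α := ℝ) n]
    · nlinarith [Nat.cast_nonneg (α := ℝ) n]
    · nlinarith [Nat.cast_nonneg (α := ℝ) n]
  have hb2 : ∀ n : ℕ, |d (-((n : ℤ) + 1))| ≤ D n := by
    intro n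
    rw [hd_def, hD_def, hF_def]
    beta_reduce
    have hc : ((-((n : ℤ) + 1) : ℤ) : ℝ) = -((n : ℝ) + 1) := by push_cast; ring
    rw [hc, hcast n]
    have hc2 : (2 * (-((n : ℝ) + 1)) ^ 2 : ℝ) = 2 * ((n : ℝ) + 1) ^ 2 := by ring
    rw [hc2]
    apply rpow_diff_le hq0 hq1
    · nlinarith [Nat.cast_nonneg (α := ℝ) n]
    · exact le_rfl
    · nlinarith [Nat.cast_nonneg (α := ℝ) n]
    · nlinarith [Nat.cast_nonneg (α := ℝ) n]
  have sD : Summable D := by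
    rw [hD_def]
    exact sF.sub ((summable_nat_add_iff 1).2 sF)
  have htel : ∑' n : ℕ, D n = F 0 := by
    rw [hD_def]
    exact telescope_tsum sF
  have hF0 : F 0 = 1 := by
    rw [hF_def]
    norm_num
  have sabs : Summable (fun n : ℤ => |d n|) := sd.abs
  have sabs1 : Summable (fun n : ℕ => |d (n : ℤ)|) :=
    sabs.comp_injective (fun a b h => by exact_mod_cast h)
  have sabs2 : Summable (fun n : ℕ => |d (-((n : ℤ) + 1))|) :=
    sabs.comp_injective (fun a b h => by omega)
  have hsplit : ∑' n : ℤ, |d n| =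
      (∑' n : ℕ, |d (n : ℤ)|) + ∑' n : ℕ, |d (-((n : ℤ) + 1))| :=
    tsum_of_nat_of_neg_add_one sabs1 sabs2
  have hB1 : ∑' n : ℕ, |d (n : ℤ)| ≤ 1 := by
    calc ∑' n : ℕ, |d (n : ℤ)| ≤ ∑' n, D n := Summable.tsum_le_tsum hb1 sabs1 sD
      _ = 1 := by rw [htel, hF0]
  have hB2 : ∑' n : ℕ, |d (-((n : ℤ) + 1))| ≤ 1 := by
    calc ∑' n : ℕ, |d (-((n : ℤ) + 1))| ≤ ∑' n, D n := Summable.tsum_le_tsum hb2 sabs2 sD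
      _ = 1 := by rw [htel, hF0]
  have habs : |∑' n : ℤ, d n| ≤ ∑' n : ℤ, |d n| := by
    have := norm_tsum_le_tsum_norm (f := d) (by simpa [Real.norm_eq_abs] using sabs)
    simpa [Real.norm_eq_abs] using this
  rw [hsub]
  calc |∑' n : ℤ, d n| ≤ ∑' n : ℤ, |d n| := habs
    _ = _ + _ := hsplit
    _ ≤ 2 := by linarith

end GG

/-- The quantum dimension limit: as `q → 1⁻` (through `q ∈ (0,1)`), the ratio
`2·Θ_{0,2}(q) / (Θ_{1,2}(q) + (∂Θ)_{1,2}(q))` tends to `2`. -/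
theorem quantum_dimension_limit_eq_two :
    Filter.Tendsto (fun q : ℝ => 2 * Theta02 q / (Theta12 q + dTheta12 q))
      (nhdsWithin 1 (Set.Ioo (0 : ℝ) 1)) (𝓝 (2 : ℝ)) := by
  set L := nhdsWithin (1:ℝ) (Set.Ioo (0:ℝ) 1) with hL
  have hmem : ∀ᶠ q in L, q ∈ Set.Ioo (0:ℝ) 1 := eventually_mem_nhdsWithin
  have hgt : ∀ᶠ q in L, Real.exp (-1) < q := by
    apply Filter.Eventually.filter_mono nhdsWithin_le_nhds
    apply eventually_gt_nhds
    exact Real.exp_lt_one_iff.2 (by norm_num)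
  have hdT : ∀ᶠ q in L, |dTheta12 q| ≤ 500 := by
    filter_upwards [hmem, hgt] with q hq hq'
    obtain ⟨hq0, hq1⟩ := hq
    have hlog : Real.log q < 0 := Real.log_neg hq0 hq1
    have ht0 : 0 < -Real.log q := by linarith
    have ht1 : -Real.log q ≤ 1 := by
      have h2 : -1 < Real.log q := by
        have := Real.log_lt_log (Real.exp_pos (-1)) hq'
        rwa [Real.log_exp] at this
      linarith
    rw [dTheta12_eq hq0 hq1]
    exact abs_alt_sum_le ht0 ht1
  have hE1 : ∀ᶠ q in L, |Theta02 q - Theta12 q| ≤ 2 := by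
    filter_upwards [hmem] with q hq
    exact theta_diff_bound hq.1 hq.2
  have hSpos : ∀ᶠ q in L, 0 < Theta12 q := by
    filter_upwards [hmem] with q hq
    exact theta12_pos hq.1 hq.2
  have hS : Filter.Tendsto (fun q => Theta12 q) L Filter.atTop := by
    rw [Filter.tendsto_atTop]
    intro b
    obtain ⟨N, hN⟩ := exists_nat_gt b
    have hcont : Filter.Tendsto
        (fun q : ℝ => (N:ℝ) * q ^ (((4 * (N:ℝ) + 1) ^ 2 / 8) : ℝ)) L (𝓝 (N:ℝ)) := by
      have h1 : ContinuousAt (fun q : ℝ => q ^ (((4 * (N:ℝ) + 1) ^ 2 / 8) : ℝ)) 1 :=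
        Real.continuousAt_rpow_const 1 _ (Or.inl one_ne_zero)
      have h2 : Filter.Tendsto (fun q : ℝ => q ^ (((4 * (N:ℝ) + 1) ^ 2 / 8) : ℝ)) L
          (𝓝 ((1:ℝ) ^ (((4 * (N:ℝ) + 1) ^ 2 / 8) : ℝ))) :=
        h1.tendsto.mono_left nhdsWithin_le_nhds
      have h3 := h2.const_mul (N:ℝ)
      rw [Real.one_rpow, mul_one] at h3
      exact h3
    have hev : ∀ᶠ q in L, b < (N:ℝ) * q ^ (((4 * (N:ℝ) + 1) ^ 2 / 8) : ℝ) :=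
      hcont.eventually_const_lt hN
    filter_upwards [hev, hmem] with q hq hq2
    exact le_trans hq.le (theta12_ge hq2.1 hq2.2 N)
  have hA : Filter.Tendsto (fun q => (Theta02 q - Theta12 q) / Theta12 q) L (𝓝 0) := by
    apply squeeze_zero_norm' (a := fun q => 2 / Theta12 q)
    · filter_upwards [hE1, hSpos] with q h1 h2
      rw [Real.norm_eq_abs, abs_div, abs_of_pos h2]
      gcongr
    · exact Filter.Tendsto.div_atTop tendsto_const_nhds hS
  have hB : Filter.Tendsto (fun q => dTheta12 q / Theta12 q) L (𝓝 0) := by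
    apply squeeze_zero_norm' (a := fun q => 500 / Theta12 q)
    · filter_upwards [hdT, hSpos] with q h1 h2
      rw [Real.norm_eq_abs, abs_div, abs_of_pos h2]
      gcongr
    · exact Filter.Tendsto.div_atTop tendsto_const_nhds hS
  have hG : Filter.Tendsto
      (fun q => (2 + 2 * ((Theta02 q - Theta12 q) / Theta12 q)) /
        (1 + dTheta12 q / Theta12 q)) L (𝓝 2) := by
    have hnum : Filter.Tendsto (fun q => 2 + 2 * ((Theta02 q - Theta12 q) / Theta12 q)) L
        (𝓝 (2 + 2 * 0)) := tendsto_const_nhds.add (hA.const_mul 2)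
    have hden : Filter.Tendsto (fun q => 1 + dTheta12 q / Theta12 q) L (𝓝 (1 + 0)) :=
      tendsto_const_nhds.add hB
    have := hnum.div hden (by norm_num)
    convert this using 2
    all_goals norm_num
  have heq : (fun q => (2 + 2 * ((Theta02 q - Theta12 q) / Theta12 q)) /
        (1 + dTheta12 q / Theta12 q)) =ᶠ[L]
      (fun q : ℝ => 2 * Theta02 q / (Theta12 q + dTheta12 q)) := by
    filter_upwards [hSpos] with q hq
    have hne : Theta12 q ≠ 0 := ne_of_gt hq
    have h1 : 2 + 2 * ((Theta02 q - Theta12 q) / Theta12 q)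
        = (2 * Theta02 q) / Theta12 q := by
      field_simp
      ring
    have h2 : 1 + dTheta12 q / Theta12 q = (Theta12 q + dTheta12 q) / Theta12 q := by
      field_simp
    rw [h1, h2, div_div_div_cancel_right₀ hne]
  exact hG.congr' heq
end
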